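/- arXiv:math/0310079 — 5 statements merged into one kernel-verified Lean document; each statement's English description precedes it below -/
import Mathlib

section
/- The number of jagged 01-partitions of n equals the Cauchy convolution sum over m from 0 to n of p(n-m)·d(m), where p counts ordinary partitions and d counts partitions into distinct parts. -/
/-- A 01-partition: a finite sequence of non-negative integers whose last entry is ≥ 1,
satisfying the weakly decreasing conditions `n_j ≥ n_{j+1} - 1` and `n_j ≥ n_{j+2}`. -/
def Is01 (l : List ℕ) : Prop :=
  (∀ i, i + 1 < l.length → l[i + 1]! ≤ l[i]! + 1) ∧
  (∀ i, i + 2 < l.length → l[i + 2]! ≤ l[i]!) ∧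
  (l ≠ [] → 1 ≤ l.getLast!)

/-- `j01 n` is the number of 01-partitions of `n` (with `j01 0 = 1`, the empty sequence). -/
noncomputable def j01 (n : ℕ) : ℕ := Nat.card {l : List ℕ // Is01 l ∧ l.sum = n}

set_option maxHeartbeats 1000000

namespace Jagged

inductive J01 : List ℕ → Prop
  | nil : J01 []
  | single (x : ℕ) (hx : 1 ≤ x) : J01 [x]
  | cons (x y : ℕ) (t : List ℕ) (h1 : y ≤ x + 1) (h2 : ∀ z ∈ t.head?, z ≤ x)
      (h : J01 (y :: t)) : J01 (x :: y :: t)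

theorem J01.tail {x : ℕ} {t : List ℕ} (h : J01 (x :: t)) : J01 t := by
  cases h with
  | single => exact J01.nil
  | cons => assumption

def parse : List ℕ → Multiset ℕ × Multiset ℕ
  | [] => (0, 0)
  | [x] => ({x}, 0)
  | x :: y :: t =>
    if y = x + 1 then ((parse t).1, (x + 1) ::ₘ (parse t).2)
    else (x ::ₘ (parse (y :: t)).1, (parse (y :: t)).2)

@[simp] theorem parse_nil : parse [] = (0, 0) := rfl
@[simp] theorem parse_singleton (x : ℕ) : parse [x] = ({x}, 0) := rfl
theorem parse_pair (x : ℕ) (t : List ℕ) :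
    parse (x :: (x + 1) :: t) = ((parse t).1, (x + 1) ::ₘ (parse t).2) := by
  simp [parse]
theorem parse_nonpair {x y : ℕ} (t : List ℕ) (h : y ≠ x + 1) :
    parse (x :: y :: t) = (x ::ₘ (parse (y :: t)).1, (parse (y :: t)).2) := by
  simp [parse, h]

theorem parse_sum (l : List ℕ) :
    (parse l).1.sum + ((parse l).2.map fun a => 2 * a - 1).sum = l.sum := by
  induction l using parse.induct with
  | case1 => simp
  | case2 x => simp
  | case3 x t ih => rw [parse_pair]; simp at ih ⊢; omega
  | case4 x y t h ih => rw [parse_nonpair t h]; simp at ih ⊢; omega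

theorem parse_fst_mem {l : List ℕ} {v : ℕ} (h : v ∈ (parse l).1) : v ∈ l := by
  induction l using parse.induct with
  | case1 => simp at h
  | case2 x => simp at h; simp [h]
  | case3 x t ih => rw [parse_pair] at h; simp only [List.mem_cons]; exact .inr (.inr (ih h))
  | case4 x y t hne ih =>
    rw [parse_nonpair t hne] at h
    rcases Multiset.mem_cons.mp h with h | h
    · simp [h]
    · simp only [List.mem_cons]; rcases List.mem_cons.mp (ih h) with h | h
      · exact .inr (.inl h)
      · exact .inr (.inr h)

theorem parse_snd_mem {l : List ℕ} {a : ℕ} (h : a ∈ (parse l).2) : a ∈ l := by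
  induction l using parse.induct with
  | case1 => simp at h
  | case2 x => simp at h
  | case3 x t ih =>
    rw [parse_pair] at h
    rcases Multiset.mem_cons.mp h with h | h
    · simp [h]
    · simp only [List.mem_cons]; exact .inr (.inr (ih h))
  | case4 x y t hne ih =>
    rw [parse_nonpair t hne] at h
    simp only [List.mem_cons]
    rcases List.mem_cons.mp (ih h) with h | h
    · exact .inr (.inl h)
    · exact .inr (.inr h)

theorem parse_snd_pos {l : List ℕ} {a : ℕ} (h : a ∈ (parse l).2) : 1 ≤ a := by
  induction l using parse.induct with
  | case1 => simp at h
  | case2 x => simp at h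
  | case3 x t ih =>
    rw [parse_pair] at h
    rcases Multiset.mem_cons.mp h with h | h
    · omega
    · exact ih h
  | case4 x y t hne ih => rw [parse_nonpair t hne] at h; exact ih h

theorem entries_le {x y : ℕ} {t : List ℕ} (h : J01 (x :: y :: t)) :
    ∀ e ∈ t, e ≤ max x y := by
  induction t generalizing x y with
  | nil => simp
  | cons z t ih =>
    intro e he
    cases h with
    | cons _ _ _ h1 h2 h =>
      have hz : z ≤ x := h2 z (by simp)
      rcases List.mem_cons.mp he with rfl | he
      · omega
      · have := ih h e he
        simp at this ⊢; omega

theorem parse_fst_le_head (l : List ℕ) (h : J01 l) :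
    ∀ v ∈ (parse l).1, v ≤ l.head! := by
  induction l using parse.induct with
  | case1 => simp
  | case2 x => simp
  | case3 x t ih =>
    intro v hv
    rw [parse_pair] at hv
    cases t with
    | nil => simp at hv
    | cons z t' =>
      have hz : z ≤ x := by
        cases h with
        | cons _ _ _ h1 h2 _ => exact h2 z (by simp)
      have := ih (h.tail.tail) v hv
      simp at this ⊢; omega
  | case4 x y t hne ih =>
    intro v hv
    rw [parse_nonpair t hne] at hv
    have hy : y ≤ x := by
      cases h with
      | cons _ _ _ h1 _ _ => omega
    rcases Multiset.mem_cons.mp hv with rfl | hv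
    · simp
    · have := ih h.tail v hv
      simp at this ⊢; omega

theorem not_J01_zero_zero (t : List ℕ) : ¬ J01 (0 :: 0 :: t) := by
  induction t with
  | nil => intro h; cases h with | cons _ _ _ _ _ h => cases h with | single _ hx => omega
  | cons z t' ih =>
    intro h
    cases h with
    | cons _ _ _ h1 h2 h =>
      have hz : z ≤ 0 := h2 z (by simp)
      interval_cases z
      exact ih h

theorem parse_fst_pos (l : List ℕ) (h : J01 l) : ∀ v ∈ (parse l).1, 1 ≤ v := by
  induction l using parse.induct with
  | case1 => simp
  | case2 x =>
    intro v hv; simp at hv; subst hv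
    cases h with | single _ hx => exact hx
  | case3 x t ih =>
    intro v hv; rw [parse_pair] at hv
    exact ih h.tail.tail v hv
  | case4 x y t hne ih =>
    intro v hv; rw [parse_nonpair t hne] at hv
    rcases Multiset.mem_cons.mp hv with rfl | hv
    · by_contra hx
      have hx0 : v = 0 := by omega
      subst hx0
      have hy : y = 0 := by
        cases h with | cons _ _ _ h1 _ _ => omega
      subst hy
      exact not_J01_zero_zero t h
    · exact ih h.tail v hv

theorem entry_le_parse (l : List ℕ) :
    ∀ e ∈ l, (∃ v ∈ (parse l).1, e ≤ v) ∨ (∃ a ∈ (parse l).2, e ≤ a) := by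
  induction l using parse.induct with
  | case1 => simp
  | case2 x => intro e he; simp at he; subst he; exact .inl ⟨e, by simp⟩
  | case3 x t ih =>
    intro e he
    rw [parse_pair]
    rcases List.mem_cons.mp he with rfl | he
    · exact .inr ⟨e + 1, by simp, by omega⟩
    rcases List.mem_cons.mp he with rfl | he
    · exact .inr ⟨x + 1, by simp, le_refl _⟩
    · rcases ih e he with ⟨v, hv, hev⟩ | ⟨a, ha, hea⟩
      · exact .inl ⟨v, hv, hev⟩
      · exact .inr ⟨a, Multiset.mem_cons_of_mem ha, hea⟩
  | case4 x y t hne ih =>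
    intro e he
    rw [parse_nonpair t hne]
    rcases List.mem_cons.mp he with rfl | he
    · exact .inl ⟨e, by simp, le_refl _⟩
    · rcases ih e he with ⟨v, hv, hev⟩ | ⟨a, ha, hea⟩
      · exact .inl ⟨v, Multiset.mem_cons_of_mem hv, hev⟩
      · exact .inr ⟨a, ha, hea⟩

theorem head_block (x : ℕ) (r : List ℕ) :
    x ∈ (parse (x :: r)).1 ∨ x + 1 ∈ (parse (x :: r)).2 := by
  cases r with
  | nil => left; simp
  | cons y t =>
    by_cases hy : y = x + 1
    · subst hy; right; rw [parse_pair]; simp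
    · left; rw [parse_nonpair t hy]; simp

theorem parse_cons_single {x : ℕ} {r : List ℕ} (hr : ∀ z ∈ r.head?, z ≠ x + 1) :
    parse (x :: r) = (x ::ₘ (parse r).1, (parse r).2) := by
  cases r with
  | nil => simp
  | cons y t => exact parse_nonpair t (hr y (by simp))

theorem J01.cons_single {l : List ℕ} (h : J01 l) {M : ℕ} (hM : 1 ≤ M)
    (hb : ∀ e ∈ l, e ≤ M) : J01 (M :: l) := by
  cases l with
  | nil => exact J01.single M hM
  | cons y t =>
    refine J01.cons M y t ?_ ?_ h
    · have := hb y (by simp); omega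
    · intro z hz
      cases t with
      | nil => simp at hz
      | cons a t => simp at hz; subst hz; exact hb a (by simp)

theorem J01.cons_pair {l : List ℕ} (h : J01 l) {M : ℕ} (hM : 1 ≤ M)
    (hb : ∀ e ∈ l, e ≤ M) (hh : ∀ z ∈ l.head?, z + 1 ≤ M) : J01 ((M - 1) :: M :: l) := by
  refine J01.cons (M - 1) M l (by omega) ?_ (h.cons_single hM hb)
  intro z hz
  have := hh z hz; omega

theorem all_entries_le_single_start {x : ℕ} {r : List ℕ} (h : J01 (x :: r))
    (hr : ∀ z ∈ r.head?, z ≠ x + 1) : ∀ e ∈ x :: r, e ≤ x := by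
  intro e he
  rcases List.mem_cons.mp he with rfl | he
  · exact le_refl _
  cases r with
  | nil => simp at he
  | cons y t =>
    have hy : y ≤ x := by
      cases h with
      | cons _ _ _ h1 _ _ =>
        have := hr y (by simp); omega
    rcases List.mem_cons.mp he with rfl | he
    · exact hy
    · have := entries_le h e he; omega

theorem all_entries_le_pair_start {x : ℕ} {t : List ℕ} (h : J01 (x :: (x + 1) :: t)) :
    ∀ e ∈ x :: (x + 1) :: t, e ≤ x + 1 := by
  intro e he
  rcases List.mem_cons.mp he with rfl | he
  · omega
  rcases List.mem_cons.mp he with rfl | he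
  · exact le_refl _
  · have := entries_le h e he; omega

theorem shape (l : List ℕ) :
    l = [] ∨ (∃ x r, l = x :: r ∧ ∀ z ∈ r.head?, z ≠ x + 1) ∨
      ∃ x t, l = x :: (x + 1) :: t := by
  cases l with
  | nil => exact .inl rfl
  | cons x r =>
    cases r with
    | nil => exact .inr (.inl ⟨x, [], rfl, by simp⟩)
    | cons y t =>
      by_cases hy : y = x + 1
      · subst hy; exact .inr (.inr ⟨x, t, rfl⟩)
      · exact .inr (.inl ⟨x, y :: t, rfl, by simpa using hy⟩)

theorem eq_nil_of_parse_eq_zero {l : List ℕ} (h : parse l = (0, 0)) : l = [] := by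
  rcases shape l with rfl | ⟨x, r, rfl, hr⟩ | ⟨x, t, rfl⟩
  · rfl
  · rw [parse_cons_single hr] at h
    exact absurd (congrArg Prod.fst h) (by simp)
  · rw [parse_pair] at h
    exact absurd (congrArg Prod.snd h) (by simp)

theorem no_mixed {x x' : ℕ} {r t' : List ℕ} (h : J01 (x :: r))
    (hr : ∀ z ∈ r.head?, z ≠ x + 1) (h' : J01 (x' :: (x' + 1) :: t'))
    (hp : parse (x :: r) = parse (x' :: (x' + 1) :: t')) : False := by
  have hx1 : x ∈ (parse (x' :: (x' + 1) :: t')).1 := by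
    rw [← hp, parse_cons_single hr]; simp
  have hxle : x ≤ x' := by
    simpa using parse_fst_le_head _ h' x hx1
  have hx2 : x' + 1 ∈ (parse (x :: r)).2 := by
    rw [hp, parse_pair]; simp
  have := all_entries_le_single_start h hr (x' + 1) (parse_snd_mem hx2)
  omega

theorem parse_inj : ∀ (N : ℕ) (l l' : List ℕ), l.length ≤ N → J01 l → J01 l' →
    parse l = parse l' → l = l' := by
  intro N
  induction N with
  | zero =>
    intro l l' hlen hJ hJ' hp
    have : l = [] := List.length_eq_zero_iff.mp (by omega)
    subst this
    exact (eq_nil_of_parse_eq_zero (by rw [← hp]; rfl)).symm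
  | succ N ih =>
    intro l l' hlen hJ hJ' hp
    rcases shape l with rfl | ⟨x, r, rfl, hr⟩ | ⟨x, t, rfl⟩ <;>
      rcases shape l' with rfl | ⟨x', r', rfl, hr'⟩ | ⟨x', t', rfl⟩
    · rfl
    · exact (eq_nil_of_parse_eq_zero (l := x' :: r') (by rw [← hp]; rfl)).symm
    · exact (eq_nil_of_parse_eq_zero (l := x' :: (x' + 1) :: t') (by rw [← hp]; rfl)).symm
    · exact eq_nil_of_parse_eq_zero (by rw [hp]; rfl)
    · -- single vs single
      have hxx' : x = x' := by
        have h1 : x' ∈ (parse (x :: r)).1 := by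
          rw [hp, parse_cons_single hr']; simp
        have h2 : x ∈ (parse (x' :: r')).1 := by
          rw [← hp, parse_cons_single hr]; simp
        have b1 := all_entries_le_single_start hJ hr x' (parse_fst_mem h1)
        have b2 := all_entries_le_single_start hJ' hr' x (parse_fst_mem h2)
        omega
      subst hxx'
      rw [parse_cons_single hr, parse_cons_single hr'] at hp
      rw [Prod.mk.injEq] at hp
      have hq : parse r = parse r' :=
        Prod.ext ((Multiset.cons_inj_right x).mp hp.1) hp.2
      have : r = r' := ih r r' (by simpa using hlen) hJ.tail hJ'.tail hq
      rw [this]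
    · exact absurd (no_mixed hJ hr hJ' hp) (by simp)
    · exact eq_nil_of_parse_eq_zero (by rw [hp]; rfl)
    · exact absurd (no_mixed hJ' hr' hJ hp.symm) (by simp)
    · -- pair vs pair
      have hxx' : x = x' := by
        have h1 : x' + 1 ∈ (parse (x :: (x + 1) :: t)).2 := by
          rw [hp, parse_pair]; simp
        have h2 : x + 1 ∈ (parse (x' :: (x' + 1) :: t')).2 := by
          rw [← hp, parse_pair]; simp
        have b1 := all_entries_le_pair_start hJ (x' + 1) (parse_snd_mem h1)
        have b2 := all_entries_le_pair_start hJ' (x + 1) (parse_snd_mem h2)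
        omega
      subst hxx'
      rw [parse_pair, parse_pair] at hp
      rw [Prod.mk.injEq] at hp
      have hq : parse t = parse t' :=
        Prod.ext hp.1 ((Multiset.cons_inj_right (x+1)).mp hp.2)
      have : t = t' := ih t t' (by simp at hlen ⊢; omega) hJ.tail.tail hJ'.tail.tail hq
      rw [this]

theorem parse_surj : ∀ (N : ℕ) (s p : Multiset ℕ),
    Multiset.card s + Multiset.card p ≤ N → (∀ v ∈ s, 1 ≤ v) → (∀ a ∈ p, 1 ≤ a) →
    ∃ l, J01 l ∧ parse l = (s, p) := by
  intro N
  induction N with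
  | zero =>
    intro s p hcard _ _
    have hs : s = 0 := by
      rw [← Multiset.card_eq_zero]; omega
    have hp : p = 0 := by
      rw [← Multiset.card_eq_zero]; omega
    exact ⟨[], J01.nil, by simp [hs, hp]⟩
  | succ N ih =>
    intro s p hcard hs hp
    by_cases h0 : s + p = 0
    · have hc := congrArg Multiset.card h0
      rw [Multiset.card_add] at hc
      simp only [Multiset.card_zero] at hc
      have hs0 : s = 0 := by rw [← Multiset.card_eq_zero]; omega
      have hp0 : p = 0 := by rw [← Multiset.card_eq_zero]; omega
      exact ⟨[], J01.nil, by simp [hs0, hp0]⟩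
    · have hne : (s + p).toFinset.Nonempty := by
        rw [Multiset.toFinset_nonempty]; exact h0
      obtain ⟨M, hMmem, hMax⟩ : ∃ M, M ∈ s + p ∧ ∀ v ∈ s + p, v ≤ M :=
        ⟨(s + p).toFinset.max' hne,
          Multiset.mem_toFinset.mp ((s + p).toFinset.max'_mem hne),
          fun v hv => (s + p).toFinset.le_max' v (Multiset.mem_toFinset.mpr hv)⟩
      have hM1 : 1 ≤ M := by
        rcases Multiset.mem_add.mp hMmem with h | h
        · exact hs M h
        · exact hp M h
      by_cases hMs : M ∈ s
      · obtain ⟨l, hJ, hpl⟩ := ih (s.erase M) p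
          (by rw [Multiset.card_erase_of_mem hMs, Nat.pred_eq_sub_one]
              have hpos : 0 < Multiset.card s :=
                Multiset.card_pos_iff_exists_mem.mpr ⟨M, hMs⟩
              omega)
          (fun v hv => hs v (Multiset.mem_of_mem_erase hv)) hp
        have hb : ∀ e ∈ l, e ≤ M := by
          intro e he
          rcases entry_le_parse l e he with ⟨v, hv, hev⟩ | ⟨a, ha, hea⟩
          · rw [hpl] at hv
            have := hMax v (Multiset.mem_add.mpr (.inl (Multiset.mem_of_mem_erase hv)))
            omega
          · rw [hpl] at ha
            have := hMax a (Multiset.mem_add.mpr (.inr ha))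
            omega
        refine ⟨M :: l, hJ.cons_single hM1 hb, ?_⟩
        rw [parse_cons_single ?_, hpl]
        · rw [Multiset.cons_erase hMs]
        · intro z hz
          have := hb z (List.mem_of_mem_head? hz)
          omega
      · have hMp : M ∈ p := by
          rcases Multiset.mem_add.mp hMmem with h | h
          · exact absurd h hMs
          · exact h
        obtain ⟨l, hJ, hpl⟩ := ih s (p.erase M)
          (by rw [Multiset.card_erase_of_mem hMp, Nat.pred_eq_sub_one]
              have hpos : 0 < Multiset.card p :=
                Multiset.card_pos_iff_exists_mem.mpr ⟨M, hMp⟩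
              omega)
          hs (fun a ha => hp a (Multiset.mem_of_mem_erase ha))
        have hb : ∀ e ∈ l, e ≤ M := by
          intro e he
          rcases entry_le_parse l e he with ⟨v, hv, hev⟩ | ⟨a, ha, hea⟩
          · rw [hpl] at hv
            have := hMax v (Multiset.mem_add.mpr (.inl hv))
            omega
          · rw [hpl] at ha
            have := hMax a (Multiset.mem_add.mpr (.inr (Multiset.mem_of_mem_erase ha)))
            omega
        have hh : ∀ z ∈ l.head?, z + 1 ≤ M := by
          intro z hz
          cases l with
          | nil => simp at hz
          | cons y r =>
            have hzy : y = z := by simpa using hz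
            rw [← hzy]
            rcases head_block y r with h | h
            · rw [hpl] at h
              have h1 := hMax y (Multiset.mem_add.mpr (.inl h))
              have h2 : y ≠ M := fun hzM => hMs (hzM ▸ h)
              omega
            · rw [hpl] at h
              have := hMax (y + 1)
                (Multiset.mem_add.mpr (.inr (Multiset.mem_of_mem_erase h)))
              omega
        obtain ⟨x0, rfl⟩ : ∃ x0, M = x0 + 1 := ⟨M - 1, by omega⟩
        refine ⟨x0 :: (x0 + 1) :: l, ?_, ?_⟩
        · have := hJ.cons_pair hM1 hb hh
          simpa using this
        · rw [parse_pair, hpl, Multiset.cons_erase hMp]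

theorem getLast!_cons_cons (x y : ℕ) (t : List ℕ) :
    (x :: y :: t).getLast! = (y :: t).getLast! := by
  simp [List.getLast!, List.getLast_cons]


theorem is01_iff (l : List ℕ) : Is01 l ↔ J01 l := by
  constructor
  · intro h
    induction l with
    | nil => exact J01.nil
    | cons x t ih =>
      match t, h with
      | [], ⟨_, _, h3⟩ =>
        exact J01.single x (by simpa using h3 (by simp))
      | y :: t, ⟨h1, h2, h3⟩ =>
        refine J01.cons x y t ?_ ?_ (ih ?_)
        · simpa using h1 0 (by simp)
        · intro z hz
          cases t with
          | nil => simp at hz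
          | cons a t => simp at hz; subst hz; simpa using h2 0 (by simp)
        · refine ⟨fun i hi => ?_, fun i hi => ?_, fun _ => ?_⟩
          · simpa using h1 (i+1) (by simpa using hi)
          · simpa using h2 (i+1) (by simp at hi ⊢; omega)
          · have := h3 (by simp)
            rwa [getLast!_cons_cons] at this
  · intro h
    induction h with
    | nil => exact ⟨by simp, by simp, by simp⟩
    | single x hx => exact ⟨by simp, by simp, fun _ => by simpa using hx⟩
    | cons x y t h1 h2 h ih =>
      obtain ⟨i1, i2, i3⟩ := ih
      refine ⟨fun i hi => ?_, fun i hi => ?_, fun _ => ?_⟩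
      · match i with
        | 0 => simpa using h1
        | (j+1) => simpa using i1 j (by simpa using hi)
      · match i with
        | 0 =>
          simp only [List.getElem!_cons_succ, List.getElem!_cons_zero]
          cases t with
          | nil => simp at hi
          | cons a t => simpa using h2 a (by simp)
        | (j+1) => simpa using i2 j (by simp at hi ⊢; omega)
      · rw [getLast!_cons_cons]
        exact i3 (by simp)

abbrev Cond (n : ℕ) (c : Multiset ℕ × Multiset ℕ) : Prop :=
  (∀ v ∈ c.1, 1 ≤ v) ∧ (∀ a ∈ c.2, 1 ≤ a) ∧
    c.1.sum + (c.2.map fun a => 2 * a - 1).sum = n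

theorem cardA (n : ℕ) :
    Nat.card {l : List ℕ // Is01 l ∧ l.sum = n} =
      Nat.card {c : Multiset ℕ × Multiset ℕ // Cond n c} := by
  apply Nat.card_eq_of_bijective
    (f := fun l => ⟨parse l.1,
      parse_fst_pos l.1 ((is01_iff l.1).mp l.2.1),
      fun a ha => parse_snd_pos ha,
      by rw [parse_sum]; exact l.2.2⟩)
  constructor
  · rintro ⟨l, hl⟩ ⟨l', hl'⟩ hab
    have : parse l = parse l' := congrArg Subtype.val hab
    exact Subtype.ext (parse_inj l.length l l' le_rfl
      ((is01_iff l).mp hl.1) ((is01_iff l').mp hl'.1) this)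
  · rintro ⟨c, hc1, hc2, hc3⟩
    obtain ⟨l, hJ, hpl⟩ := parse_surj (Multiset.card c.1 + Multiset.card c.2) c.1 c.2
      le_rfl hc1 hc2
    refine ⟨⟨l, (is01_iff l).mpr hJ, ?_⟩, ?_⟩
    · rw [← parse_sum l, hpl]; exact hc3
    · exact Subtype.ext (by simp [hpl])

theorem odd_mem {m : ℕ} {q : Nat.Partition m} (hq : q ∈ Nat.Partition.odds m) :
    ∀ i ∈ q.parts, ¬ Even i :=
  (Finset.mem_filter.mp hq).2

def toC (n : ℕ)
    (x : Σ m : Fin (n + 1), Nat.Partition (n - (m : ℕ)) ×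
      {q : Nat.Partition (m : ℕ) // q ∈ Nat.Partition.odds (m : ℕ)}) :
    {c : Multiset ℕ × Multiset ℕ // Cond n c} :=
  ⟨(x.2.1.parts, x.2.2.1.parts.map fun w => (w + 1) / 2), by
    refine ⟨fun v hv => x.2.1.parts_pos hv, fun a ha => ?_, ?_⟩
    · obtain ⟨w, hw, rfl⟩ := Multiset.mem_map.mp ha
      have := x.2.2.1.parts_pos hw
      omega
    · have hmap : (x.2.2.1.parts.map fun w => (w + 1) / 2).map (fun a => 2 * a - 1)
          = x.2.2.1.parts := by
        rw [Multiset.map_map]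
        have : x.2.2.1.parts.map ((fun a => 2 * a - 1) ∘ fun w => (w + 1) / 2)
            = x.2.2.1.parts.map id := by
          apply Multiset.map_congr rfl
          intro w hw
          have ho := odd_mem x.2.2.2 w hw
          rw [Nat.even_iff] at ho
          simp only [Function.comp_apply, id_eq]
          omega
        rw [this, Multiset.map_id]
      rw [hmap, x.2.1.parts_sum, x.2.2.1.parts_sum]
      have := x.1.isLt
      omega⟩

theorem toC_bijective (n : ℕ) : Function.Bijective (toC n) := by
  constructor
  · rintro ⟨m, P, Q⟩ ⟨m', P', Q'⟩ h
    have hv := congrArg Subtype.val h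
    rw [Prod.mk.injEq] at hv
    obtain ⟨h1, h2⟩ := hv
    have recover : ∀ (k : ℕ) (q : Nat.Partition k), (∀ i ∈ q.parts, ¬ Even i) →
        (q.parts.map fun w => (w + 1) / 2).map (fun a => 2 * a - 1) = q.parts := by
      intro k q hodd
      rw [Multiset.map_map]
      have : q.parts.map ((fun a => 2 * a - 1) ∘ fun w => (w + 1) / 2)
          = q.parts.map id := by
        apply Multiset.map_congr rfl
        intro w hw
        have ho := hodd w hw
        rw [Nat.even_iff] at ho
        simp only [Function.comp_apply, id_eq]
        omega
      rw [this, Multiset.map_id]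
    have hQ : Q.1.parts = Q'.1.parts := by
      rw [← recover _ Q.1 (odd_mem Q.2), ← recover _ Q'.1 (odd_mem Q'.2)]
      exact congrArg (Multiset.map fun a => 2 * a - 1) h2
    have hm : m = m' := by
      apply Fin.ext
      rw [← Q.1.parts_sum, ← Q'.1.parts_sum, hQ]
    subst hm
    have hP : P = P' := Nat.Partition.ext h1
    have hQQ : Q = Q' := Subtype.ext (Nat.Partition.ext hQ)
    rw [hP, hQQ]
  · rintro ⟨⟨s, p⟩, h1, h2, h3⟩
    simp only at h1 h2 h3
    set m : ℕ := (p.map fun a => 2 * a - 1).sum with hmdef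
    have hmn : m ≤ n := by omega
    refine ⟨⟨⟨m, by omega⟩, ⟨s, fun {i} hi => h1 i hi, by simp only; omega⟩,
      ⟨⟨p.map fun a => 2 * a - 1, ?_, rfl⟩, ?_⟩⟩, ?_⟩
    · intro i hi
      obtain ⟨a, ha, rfl⟩ := Multiset.mem_map.mp hi
      have := h2 a ha
      omega
    · refine Finset.mem_filter.mpr ⟨Finset.mem_univ _, fun i hi => ?_⟩
      obtain ⟨a, ha, rfl⟩ := Multiset.mem_map.mp hi
      have := h2 a ha
      rw [Nat.even_iff]
      omega
    · apply Subtype.ext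
      simp only [toC]
      refine Prod.ext rfl ?_
      simp only
      rw [Multiset.map_map]
      have : p.map ((fun w => (w + 1) / 2) ∘ fun a => 2 * a - 1) = p.map id := by
        apply Multiset.map_congr rfl
        intro a ha
        have := h2 a ha
        simp only [Function.comp_apply, id_eq]
        omega
      rw [this, Multiset.map_id]

theorem cardB (n : ℕ) :
    Nat.card {c : Multiset ℕ × Multiset ℕ // Cond n c} =
      ∑ m ∈ Finset.range (n + 1),
        Fintype.card (Nat.Partition (n - m)) * (Nat.Partition.odds m).card := by
  rw [← Nat.card_eq_of_bijective (toC n) (toC_bijective n), Nat.card_eq_fintype_card,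
    Fintype.card_sigma]
  rw [← Fin.sum_univ_eq_sum_range
    (fun m => Fintype.card (Nat.Partition (n - m)) * (Nat.Partition.odds m).card) (n + 1)]
  congr 1
  funext m
  rw [Fintype.card_prod, Fintype.card_coe]

end Jagged


open PowerSeries

namespace Theorems100

noncomputable section

variable {α : Type*}

open Finset

open scoped Classical

/-- The partial product for the generating function for odd partitions.
TODO: As `m` tends to infinity, this converges (in the `X`-adic topology).

If `m` is sufficiently large, the `i`th coefficient gives the number of odd partitions of the
natural number `i`: proved in `oddGF_prop`.
It is stated for an arbitrary field `α`, though it usually suffices to use `ℚ` or `ℝ`.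
-/
def partialOddGF (m : ℕ) [Field α] :=
  ∏ i ∈ range m, (1 - (X : PowerSeries α) ^ (2 * i + 1))⁻¹

/-- The partial product for the generating function for distinct partitions.
TODO: As `m` tends to infinity, this converges (in the `X`-adic topology).

If `m` is sufficiently large, the `i`th coefficient gives the number of distinct partitions of the
natural number `i`: proved in `distinctGF_prop`.
It is stated for an arbitrary commutative semiring `α`, though it usually suffices to use `ℕ`, `ℚ`
or `ℝ`.
-/
def partialDistinctGF (m : ℕ) [CommSemiring α] :=
  ∏ i ∈ range m, (1 + (X : PowerSeries α) ^ (i + 1))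

open Finset.HasAntidiagonal

universe u
variable {ι : Type u}

/-- A convenience constructor for the power series whose coefficients indicate a subset. -/
def indicatorSeries (α : Type*) [Semiring α] (s : Set ℕ) : PowerSeries α :=
  PowerSeries.mk fun n => if n ∈ s then 1 else 0

theorem coeff_indicator (s : Set ℕ) [Semiring α] (n : ℕ) :
    coeff (R := α) n (indicatorSeries _ s) = if n ∈ s then 1 else 0 :=
  coeff_mk _ _

theorem coeff_indicator_pos (s : Set ℕ) [Semiring α] (n : ℕ) (h : n ∈ s) :
    coeff (R := α) n (indicatorSeries _ s) = 1 := by rw [coeff_indicator, if_pos h]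

theorem coeff_indicator_neg (s : Set ℕ) [Semiring α] (n : ℕ) (h : n ∉ s) :
    coeff (R := α) n (indicatorSeries _ s) = 0 := by rw [coeff_indicator, if_neg h]

theorem constantCoeff_indicator (s : Set ℕ) [Semiring α] :
    constantCoeff (R := α) (indicatorSeries _ s) = if 0 ∈ s then 1 else 0 :=
  rfl

theorem two_series (i : ℕ) [Semiring α] :
    1 + (X : PowerSeries α) ^ i.succ = indicatorSeries α {0, i.succ} := by
  ext n
  simp only [coeff_indicator, coeff_one, coeff_X_pow, Set.mem_insert_iff, Set.mem_singleton_iff,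
    map_add]
  cases' n with d
  · simp [(Nat.succ_ne_zero i).symm]
  · simp [Nat.succ_ne_zero d]

theorem num_series' [Field α] (i : ℕ) :
    (1 - (X : PowerSeries α) ^ (i + 1))⁻¹ = indicatorSeries α {k | i + 1 ∣ k} := by
  rw [PowerSeries.inv_eq_iff_mul_eq_one]
  · ext n
    cases n with
    | zero => simp [mul_sub, zero_pow, constantCoeff_indicator]
    | succ n =>
      simp only [coeff_one, if_false, mul_sub, mul_one, coeff_indicator,
        LinearMap.map_sub, reduceCtorEq]
      simp_rw [coeff_mul, coeff_X_pow, coeff_indicator, @boole_mul _ _ _ _]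
      rw [@Finset.sum_ite _ _ _ _ _ (fun _ => Classical.propDecidable _), Finset.sum_ite]
      simp_rw [@filter_filter _ _ _ _ _, sum_const_zero, add_zero, sum_const, nsmul_eq_mul, mul_one,
        sub_eq_iff_eq_add, zero_add]
      symm
      split_ifs with h
      · suffices #{a ∈ antidiagonal (n + 1) | i + 1 ∣ a.fst ∧ a.snd = i + 1} = 1 by
          simp only [Set.mem_setOf_eq]; convert congr_arg ((↑) : ℕ → α) this; norm_cast
        rw [card_eq_one]
        cases' h with p hp
        refine ⟨((i + 1) * (p - 1), i + 1), ?_⟩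
        ext ⟨a₁, a₂⟩
        simp only [mem_filter, Prod.mk.injEq, Finset.HasAntidiagonal.mem_antidiagonal, mem_singleton]
        constructor
        · rintro ⟨a_left, ⟨a, rfl⟩, rfl⟩
          refine ⟨?_, rfl⟩
          rw [Nat.mul_sub_left_distrib, ← hp, ← a_left, mul_one, Nat.add_sub_cancel]
        · rintro ⟨rfl, rfl⟩
          match p with
          | 0 => rw [mul_zero] at hp; cases hp
          | p + 1 => rw [hp]; simp [mul_add]
      · suffices #{a ∈ antidiagonal (n + 1) | i + 1 ∣ a.fst ∧ a.snd = i + 1} = 0 by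
          simp only [Set.mem_setOf_eq]; convert congr_arg ((↑) : ℕ → α) this; norm_cast
        rw [card_eq_zero]
        apply eq_empty_of_forall_notMem
        simp only [Prod.forall, mem_filter, not_and, Finset.HasAntidiagonal.mem_antidiagonal]
        rintro _ h₁ h₂ ⟨a, rfl⟩ rfl
        apply h
        simp [← h₂]
  · simp [zero_pow]

def mkOdd : ℕ ↪ ℕ :=
  ⟨fun i => 2 * i + 1, fun x y h => by linarith⟩

-- The main workhorse of the partition theorem proof.
theorem partialGF_prop (α : Type*) [CommSemiring α] (n : ℕ) (s : Finset ℕ) (hs : ∀ i ∈ s, 0 < i)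
    (c : ℕ → Set ℕ) (hc : ∀ i, i ∉ s → 0 ∈ c i) :
    #{p : n.Partition | (∀ j, p.parts.count j ∈ c j) ∧ ∀ j ∈ p.parts, j ∈ s} =
      coeff (R := α) n (∏ i ∈ s, indicatorSeries α ((· * i) '' c i)) := by
  simp_rw [coeff_prod, coeff_indicator, prod_boole, sum_boole]
  apply congr_arg
  simp only [mem_univ, forall_true_left, not_and, not_forall, exists_prop,
    Set.mem_image, not_exists]
  set φ : (a : Nat.Partition n) →
    a ∈ filter (fun p ↦ (∀ (j : ℕ), Multiset.count j p.parts ∈ c j) ∧ ∀ j ∈ p.parts, j ∈ s) univ →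
    ℕ →₀ ℕ := fun p _ => {
      toFun := fun i => Multiset.count i p.parts • i
      support := Finset.filter (fun i => i ≠ 0) p.parts.toFinset
      mem_support_toFun := fun a => by
        simp only [smul_eq_mul, ne_eq, mul_eq_zero, Multiset.count_eq_zero]
        rw [not_or, not_not]
        simp only [Multiset.mem_toFinset, not_not, mem_filter] }
  refine Finset.card_bij φ ?_ ?_ ?_
  · intro a ha
    simp only [φ, not_forall, not_exists, not_and, exists_prop, mem_filter]
    rw [mem_finsuppAntidiag]
    dsimp only [ne_eq, smul_eq_mul, id_eq, eq_mpr_eq_cast, le_eq_subset, Finsupp.coe_mk]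
    simp only [mem_univ, forall_true_left, not_and, not_forall, exists_prop,
      mem_filter, true_and] at ha
    refine ⟨⟨?_, fun i ↦ ?_⟩, fun i _ ↦ ⟨a.parts.count i, ha.1 i, rfl⟩⟩
    · conv_rhs => simp [← a.parts_sum]
      rw [sum_multiset_count_of_subset _ s]
      · simp only [smul_eq_mul]
      · intro i
        simp only [Multiset.mem_toFinset, not_not, mem_filter]
        apply ha.2
    · simp only [ne_eq, Multiset.mem_toFinset, not_not, mem_filter, and_imp]
      exact fun hi _ ↦ ha.2 i hi
  · intro p₁ hp₁ p₂ hp₂ h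
    apply Nat.Partition.ext
    simp only [true_and, mem_univ, mem_filter] at hp₁ hp₂
    ext i
    simp only [φ, ne_eq, Multiset.mem_toFinset, not_not, smul_eq_mul, Finsupp.mk.injEq] at h
    by_cases hi : i = 0
    · rw [hi]
      rw [Multiset.count_eq_zero_of_notMem]
      · rw [Multiset.count_eq_zero_of_notMem]
        intro a; exact Nat.lt_irrefl 0 (hs 0 (hp₂.2 0 a))
      intro a; exact Nat.lt_irrefl 0 (hs 0 (hp₁.2 0 a))
    · rw [← mul_left_inj' hi]
      rw [funext_iff] at h
      exact h.2 i
  · simp only [φ, mem_filter, mem_finsuppAntidiag, mem_univ, exists_prop, true_and, and_assoc]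
    rintro f ⟨hf, hf₃, hf₄⟩
    have hf' : f ∈ finsuppAntidiag s n := mem_finsuppAntidiag.mpr ⟨hf, hf₃⟩
    simp only [mem_finsuppAntidiag] at hf'
    refine ⟨⟨∑ i ∈ s, Multiset.replicate (f i / i) i, ?_, ?_⟩, ?_, ?_, ?_⟩
    · intro i hi
      simp only [exists_prop, Multiset.mem_sum, mem_map, Function.Embedding.coeFn_mk] at hi
      rcases hi with ⟨t, ht, z⟩
      apply hs
      rwa [Multiset.eq_of_mem_replicate z]
    · simp_rw [Multiset.sum_sum, Multiset.sum_replicate, Nat.nsmul_eq_mul]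
      rw [← hf'.1]
      refine sum_congr rfl fun i hi => Nat.div_mul_cancel ?_
      rcases hf₄ i hi with ⟨w, _, hw₂⟩
      rw [← hw₂]
      exact dvd_mul_left _ _
    · intro i
      simp_rw [Multiset.count_sum', Multiset.count_replicate, sum_ite_eq']
      split_ifs with h
      · rcases hf₄ i h with ⟨w, hw₁, hw₂⟩
        rwa [← hw₂, Nat.mul_div_cancel _ (hs i h)]
      · exact hc _ h
    · intro i hi
      rw [Multiset.mem_sum] at hi
      rcases hi with ⟨j, hj₁, hj₂⟩
      rwa [Multiset.eq_of_mem_replicate hj₂]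
    · ext i
      simp_rw [Multiset.count_sum', Multiset.count_replicate, sum_ite_eq']
      simp only [ne_eq, Multiset.mem_toFinset, not_not, smul_eq_mul, ite_mul,
        zero_mul, Finsupp.coe_mk]
      split_ifs with h
      · apply Nat.div_mul_cancel
        rcases hf₄ i h with ⟨w, _, hw₂⟩
        apply Dvd.intro_left _ hw₂
      · apply symm
        rw [← Finsupp.notMem_support_iff]
        exact notMem_mono hf'.2 h

theorem partialOddGF_prop [Field α] (n m : ℕ) :
    #{p : n.Partition | ∀ j ∈ p.parts, j ∈ (range m).map mkOdd} = coeff (R := α) n (partialOddGF m) := by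
  rw [partialOddGF]
  convert partialGF_prop α n
    ((range m).map mkOdd) _ (fun _ => Set.univ) (fun _ _ => trivial) using 2
  · congr
    simp only [true_and, forall_const, Set.mem_univ]
  · rw [Finset.prod_map]
    simp_rw [num_series']
    congr! 2 with x
    ext k
    constructor
    · rintro ⟨p, rfl⟩
      refine ⟨p, ⟨⟩, ?_⟩
      apply mul_comm
    rintro ⟨a_w, -, rfl⟩
    apply Dvd.intro_left a_w rfl
  · intro i
    rw [mem_map]
    rintro ⟨a, -, rfl⟩
    exact Nat.succ_pos _

/-- If m is big enough, the partial product's coefficient counts the number of odd partitions -/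
theorem oddGF_prop [Field α] (n m : ℕ) (h : n < m * 2) :
    #(Nat.Partition.odds n) = coeff (R := α) n (partialOddGF m) := by
  rw [← partialOddGF_prop, Nat.Partition.odds, Nat.Partition.restricted]
  congr 1
  convert congrArg Finset.card (Finset.filter_congr (s := (Finset.univ : Finset n.Partition)) (p := fun x => ∀ i ∈ x.parts, ¬Even i) (q := fun x => ∀ j ∈ x.parts, j ∈ Finset.map mkOdd (range m)) fun p _ => ?_)
  apply forall₂_congr
  intro i hi
  have hin : i ≤ n := by
    simpa [p.parts_sum] using Multiset.single_le_sum (fun _ _ => Nat.zero_le _) _ hi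
  simp only [mkOdd, exists_prop, mem_range, Function.Embedding.coeFn_mk, mem_map]
  constructor
  · intro hi₂
    have := Nat.mod_add_div i 2
    rw [Nat.not_even_iff] at hi₂
    rw [hi₂, add_comm] at this
    refine ⟨i / 2, ?_, this⟩
    rw [Nat.div_lt_iff_lt_mul zero_lt_two]
    exact lt_of_le_of_lt hin h
  · rintro ⟨a, -, rfl⟩
    rw [even_iff_two_dvd]
    apply Nat.two_not_dvd_two_mul_add_one

theorem partialDistinctGF_prop [CommSemiring α] (n m : ℕ) :
    #{p : n.Partition |
        p.parts.Nodup ∧ ∀ j ∈ p.parts, j ∈ (range m).map ⟨Nat.succ, Nat.succ_injective⟩} =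
      coeff (R := α) n (partialDistinctGF m) := by
  rw [partialDistinctGF]
  convert partialGF_prop α n
    ((range m).map ⟨Nat.succ, Nat.succ_injective⟩) _ (fun _ => {0, 1}) (fun _ _ => Or.inl rfl)
    using 2
  · congr! with p
    rw [Multiset.nodup_iff_count_le_one]
    congr! 1 with i
    rcases Multiset.count i p.parts with (_ | _ | ms) <;> simp
  · simp_rw [Finset.prod_map, two_series]
    congr with i
    simp [Set.image_pair]
  · simp only [mem_map, Function.Embedding.coeFn_mk]
    rintro i ⟨_, _, rfl⟩
    apply Nat.succ_pos

/-- If m is big enough, the partial product's coefficient counts the number of distinct partitions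
-/
theorem distinctGF_prop [CommSemiring α] (n m : ℕ) (h : n < m + 1) :
    #(Nat.Partition.distincts n) = coeff (R := α) n (partialDistinctGF m) := by
  rw [← partialDistinctGF_prop, Nat.Partition.distincts]
  congr with p
  apply (and_iff_left _).symm
  intro i hi
  have : i ≤ n := by
    simpa [p.parts_sum] using Multiset.single_le_sum (fun _ _ => Nat.zero_le _) _ hi
  simp only [mkOdd, exists_prop, mem_range, Function.Embedding.coeFn_mk, mem_map]
  refine ⟨i - 1, ?_, Nat.succ_pred_eq_of_pos (p.parts_pos hi)⟩
  rw [tsub_lt_iff_right (Nat.one_le_iff_ne_zero.mpr (p.parts_pos hi).ne')]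
  exact lt_of_le_of_lt this h

/-- The key proof idea for the partition theorem, showing that the generating functions for both
sequences are ultimately the same (since the factor converges to 0 as m tends to infinity).
It's enough to not take the limit though, and just consider large enough `m`.
-/
theorem same_gf [Field α] (m : ℕ) :
    (partialOddGF m * (range m).prod fun i => 1 - (X : PowerSeries α) ^ (m + i + 1)) =
      partialDistinctGF m := by
  rw [partialOddGF, partialDistinctGF]
  induction' m with m ih
  · simp
  set! π₀ : PowerSeries α := ∏ i ∈ range m, (1 - X ^ (m + 1 + i + 1)) with hπ₀
  set! π₁ : PowerSeries α := ∏ i ∈ range m, (1 - X ^ (2 * i + 1))⁻¹ with hπ₁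
  set! π₂ : PowerSeries α := ∏ i ∈ range m, (1 - X ^ (m + i + 1)) with hπ₂
  set! π₃ : PowerSeries α := ∏ i ∈ range m, (1 + X ^ (i + 1)) with hπ₃
  rw [← hπ₃] at ih
  have h : constantCoeff (R := α) (1 - X ^ (2 * m + 1)) ≠ 0 := by
    rw [RingHom.map_sub, RingHom.map_pow, constantCoeff_one, constantCoeff_X,
      zero_pow (2 * m).succ_ne_zero, sub_zero]
    exact one_ne_zero
  calc
    (∏ i ∈ range (m + 1), (1 - X ^ (2 * i + 1))⁻¹) *
          ∏ i ∈ range (m + 1), (1 - X ^ (m + 1 + i + 1)) =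
        π₁ * (1 - X ^ (2 * m + 1))⁻¹ * (π₀ * (1 - X ^ (m + 1 + m + 1))) := by
      rw [prod_range_succ _ m, ← hπ₁, prod_range_succ _ m, ← hπ₀]
    _ = π₁ * (1 - X ^ (2 * m + 1))⁻¹ * (π₀ * ((1 + X ^ (m + 1)) * (1 - X ^ (m + 1)))) := by
      rw [← sq_sub_sq, one_pow, add_assoc _ m 1, ← two_mul (m + 1), pow_mul']
    _ = π₀ * (1 - X ^ (m + 1)) * (1 - X ^ (2 * m + 1))⁻¹ * (π₁ * (1 + X ^ (m + 1))) := by ring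
    _ =
        (∏ i ∈ range (m + 1), (1 - X ^ (m + 1 + i))) * (1 - X ^ (2 * m + 1))⁻¹ *
          (π₁ * (1 + X ^ (m + 1))) := by
      rw [prod_range_succ', add_zero, hπ₀]; simp_rw [← add_assoc]
    _ = π₂ * (1 - X ^ (m + 1 + m)) * (1 - X ^ (2 * m + 1))⁻¹ * (π₁ * (1 + X ^ (m + 1))) := by
      rw [add_right_comm, hπ₂, ← prod_range_succ]; simp_rw [add_right_comm]
    _ = π₂ * (1 - X ^ (2 * m + 1)) * (1 - X ^ (2 * m + 1))⁻¹ * (π₁ * (1 + X ^ (m + 1))) := by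
      rw [two_mul, add_right_comm _ m 1]
    _ = (1 - X ^ (2 * m + 1)) * (1 - X ^ (2 * m + 1))⁻¹ * π₂ * (π₁ * (1 + X ^ (m + 1))) := by ring
    _ = π₂ * (π₁ * (1 + X ^ (m + 1))) := by rw [PowerSeries.mul_inv_cancel _ h, one_mul]
    _ = π₁ * π₂ * (1 + X ^ (m + 1)) := by ring
    _ = π₃ * (1 + X ^ (m + 1)) := by rw [ih]
    _ = _ := by rw [prod_range_succ]

theorem same_coeffs [Field α] (m n : ℕ) (h : n ≤ m) :
    coeff (R := α) n (partialOddGF m) = coeff (R := α) n (partialDistinctGF m) := by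
  rw [← same_gf, coeff_mul_prod_one_sub_of_lt_order]
  rintro i -
  rw [order_X_pow]
  exact mod_cast Nat.lt_succ_of_le (le_add_right h)

theorem partition_theorem (n : ℕ) : #(Nat.Partition.odds n) = #(Nat.Partition.distincts n) := by
  suffices (#(Nat.Partition.odds n) : ℚ) = #(Nat.Partition.distincts n) from
    mod_cast this
  rw [distinctGF_prop n (n + 1) (by linarith)]
  rw [oddGF_prop n (n + 1) (by linarith)]
  apply same_coeffs (n + 1) n n.le_succ

end

end Theorems100


/-- `j(n)` is the Cauchy convolution of the ordinary partition function `p`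
and the distinct-parts partition function `d`. -/
theorem jagged_eq_conv_partitions_distincts (n : ℕ) :
    j01 n = ∑ m ∈ Finset.range (n + 1),
      Fintype.card (Nat.Partition (n - m)) * (Nat.Partition.distincts m).card := by
  rw [show j01 n = Nat.card {l : List ℕ // Is01 l ∧ l.sum = n} from rfl,
    Jagged.cardA, Jagged.cardB]
  exact Finset.sum_congr rfl fun m _ => by rw [Theorems100.partition_theorem]
end

section
/- The generating function for 01-partitions is ∑_{n≥0} j(n) q^n = ∏_{k≥1} (1+q^k)/(1-q^k) as formal power series. -/
/-!
Read backwards, a 01-partition becomes a list `r` with `r₀ ≥ 1`, `rᵢ ≤ rᵢ₊₁ + 1` and `rᵢ ≤ rᵢ₊₂`.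
Such a list splits uniquely as `(1, 0)ᵗ ++ 1ᵏ ++ (l + 1)` with `l` again of this kind, so peeling
off `D` layers encodes it by numbers `tᵢ, kᵢ` (`i < D`). A pair `1, 0` in layer `i` is raised once
by each of the `i` layers above it and contributes `2i + 1` to the sum, a single `1` contributes
`i + 1`. Hence `j(n)` counts pairs (partition into odd parts, partition) of total size `n`, i.e.
`∑ j(n) qⁿ = ∏ 1/(1 - q²ᵏ⁻¹) · ∏ 1/(1 - qᵏ)`, and Euler's `∏ (1 + qᵏ)(1 - q²ᵏ⁻¹) = 1`, used in
the exact finite form `∏_{k ≤ N} (1 + qᵏ)(1 - q²ᵏ⁻¹) = ∏_{k ≤ N} (1 - q^{N+k})`, finishes the proof.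
-/

namespace List

variable {α : Type*} [Inhabited α]

theorem getElem!_reverse (l : List α) {i : ℕ} (hi : i < l.length) :
    l.reverse[i]! = l[l.length - 1 - i]! := by
  rw [getElem!_pos _ _ (by simpa using hi), getElem!_pos _ _ (by omega), getElem_reverse]

theorem forall_getElem!_reverse_iff (R : α → α → Prop) (l : List α) (c : ℕ) :
    (∀ i, i + c < l.length → R l[i + c]! l[i]!) ↔
      ∀ i, i + c < l.reverse.length → R l.reverse[i]! l.reverse[i + c]! := by
  rw [List.length_reverse]
  constructor <;> intro h i hi <;> have := h (l.length - 1 - c - i) (by omega)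
  · rwa [getElem!_reverse _ (by omega), getElem!_reverse _ (by omega),
      show l.length - 1 - (i + c) = l.length - 1 - c - i by omega,
      show l.length - 1 - i = l.length - 1 - c - i + c by omega]
  · rwa [getElem!_reverse _ (by omega), getElem!_reverse _ (by omega),
      show l.length - 1 - (l.length - 1 - c - i) = i + c by omega,
      show l.length - 1 - (l.length - 1 - c - i + c) = i by omega] at this

end List

open Finset in
theorem prod_one_add_pow_mul_prod_one_sub_odd_pow {R : Type*} [CommRing R] (x : R) (N : ℕ) :
    (∏ k ∈ range N, (1 + x ^ (k + 1))) * ∏ k ∈ range N, (1 - x ^ (2 * k + 1)) =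
      ∏ k ∈ range N, (1 - x ^ (N + k + 1)) := by
  induction N with
  | zero => simp
  | succ N ih =>
    have hsplit : (∏ k ∈ range N, (1 - x ^ (N + k + 1))) * (1 - x ^ (2 * N + 1)) =
        (∏ k ∈ range N, (1 - x ^ (N + 1 + k + 1))) * (1 - x ^ (N + 1)) := by
      rw [show 2 * N + 1 = N + N + 1 by ring, ← prod_range_succ (fun k => 1 - x ^ (N + k + 1)),
        prod_range_succ', add_zero]
      congr 1
      exact prod_congr rfl fun k _ => by ring_nf
    calc (∏ k ∈ range (N + 1), (1 + x ^ (k + 1))) * ∏ k ∈ range (N + 1), (1 - x ^ (2 * k + 1))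
        = (∏ k ∈ range N, (1 + x ^ (k + 1))) * (∏ k ∈ range N, (1 - x ^ (2 * k + 1))) *
            ((1 + x ^ (N + 1)) * (1 - x ^ (2 * N + 1))) := by
          rw [prod_range_succ, prod_range_succ]; ring
      _ = (∏ k ∈ range N, (1 - x ^ (N + k + 1))) * (1 - x ^ (2 * N + 1)) * (1 + x ^ (N + 1)) := by
          rw [ih]; ring
      _ = (∏ k ∈ range N, (1 - x ^ (N + 1 + k + 1))) * ((1 - x ^ (N + 1)) * (1 + x ^ (N + 1))) := by
          rw [hsplit]; ring
      _ = ∏ k ∈ range (N + 1), (1 - x ^ (N + 1 + k + 1)) := by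
          rw [prod_range_succ]; ring

namespace PowerSeries

variable {R : Type*} [CommRing R]

theorem sModEq_span_X_pow_iff {N : ℕ} {f g : R⟦X⟧} :
    f ≡ g [SMOD Ideal.span {X ^ N}] ↔ ∀ m < N, coeff m f = coeff m g := by
  simp [SModEq.sub_mem, Ideal.mem_span_singleton, X_pow_dvd_iff, sub_eq_zero]

theorem one_sub_X_pow_mul_expand_mk_one {c : ℕ} (hc : c ≠ 0) :
    (1 - X ^ c : R⟦X⟧) * expand c hc (mk 1) = 1 := by
  simpa [mul_comm] using congrArg (expand c hc) (mk_one_mul_one_sub_eq_one R)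

theorem prod_one_sub_X_pow_mul_prod_expand_mk_one {ι : Type*} (s : Finset ι) (w : ι → ℕ)
    (hw : ∀ i, w i ≠ 0) :
    (∏ i ∈ s, (1 - X ^ w i : R⟦X⟧)) * ∏ i ∈ s, expand (w i) (hw i) (mk 1) = 1 := by
  rw [← Finset.prod_mul_distrib]
  exact Finset.prod_eq_one fun i _ => one_sub_X_pow_mul_expand_mk_one (hw i)

theorem prod_one_sub_X_pow_sModEq_one {ι : Type*} (s : Finset ι) (e : ι → ℕ) {N : ℕ}
    (he : ∀ i ∈ s, N ≤ e i) :
    ∏ i ∈ s, (1 - X ^ e i : R⟦X⟧) ≡ 1 [SMOD Ideal.span {X ^ N}] := by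
  rw [← Finset.prod_const_one (s := s)]
  refine SModEq.prod fun i hi => SModEq.sub_mem.2 (Ideal.mem_span_singleton.2 ?_)
  simpa using (pow_dvd_pow X (he i hi)).neg_right

open Finset in
theorem coeff_prod_expand_mk_one {ι : Type*} [Fintype ι] [DecidableEq ι] (w : ι → ℕ)
    (hw : ∀ i, w i ≠ 0) (a : ℕ) :
    coeff a (∏ i, expand (w i) (hw i) (mk 1 : R⟦X⟧)) =
      Nat.card {m : ι → ℕ // ∑ i, m i * w i = a} := by
  simp only [coeff_prod, coeff_expand, coeff_mk, Pi.one_apply, prod_boole, mem_univ, forall_const]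
  rw [sum_boole]
  congr 1
  rw [← Nat.card_eq_finsetCard]
  refine Nat.card_congr
    { toFun l := ⟨fun i => l.1 i / w i, ?_⟩
      invFun m := ⟨Finsupp.equivFunOnFinite.symm fun i => m.1 i * w i, ?_⟩
      left_inv l := ?_
      right_inv m := ?_ }
  · have hl := mem_filter.1 l.2
    simpa [Nat.div_mul_cancel (hl.2 _)] using (mem_finsuppAntidiag.1 hl.1).1
  · simp [mem_finsuppAntidiag, m.2]
  · exact Subtype.ext (Finsupp.ext fun i => Nat.div_mul_cancel ((mem_filter.1 l.2).2 i))
  · exact Subtype.ext (funext fun i => Nat.mul_div_cancel _ (Nat.pos_of_ne_zero (hw i)))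

end PowerSeries

namespace JaggedPartition

def RevChain (r : List ℕ) : Prop :=
  (∀ i, i + 1 < r.length → r[i]! ≤ r[i + 1]! + 1) ∧
  (∀ i, i + 2 < r.length → r[i]! ≤ r[i + 2]!)

def IsRev01 (r : List ℕ) : Prop := RevChain r ∧ (r ≠ [] → 1 ≤ r[0]!)

theorem is01_iff_isRev01_reverse (l : List ℕ) : Is01 l ↔ IsRev01 l.reverse := by
  rw [IsRev01, RevChain, and_assoc]
  refine and_congr (List.forall_getElem!_reverse_iff (fun a b => a ≤ b + 1) l 1)
    (and_congr (List.forall_getElem!_reverse_iff (· ≤ ·) l 2) ?_)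
  rcases l.eq_nil_or_concat with rfl | ⟨L, b, rfl⟩ <;> simp

theorem revChain_nil : RevChain [] := ⟨by simp, by simp⟩

theorem revChain_cons {a : ℕ} {r : List ℕ} :
    RevChain (a :: r) ↔
      RevChain r ∧ (0 < r.length → a ≤ r[0]! + 1) ∧ (1 < r.length → a ≤ r[1]!) := by
  constructor
  · rintro ⟨h1, h2⟩
    exact ⟨⟨fun i hi => by simpa using h1 (i + 1) (by simpa using hi),
      fun i hi => by simpa using h2 (i + 1) (by simp; omega)⟩,
      fun h => by simpa using h1 0 (by simp; omega), fun h => by simpa using h2 0 (by simp; omega)⟩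
  · rintro ⟨⟨h1, h2⟩, h3, h4⟩
    constructor
    · rintro (_ | i) hi
      · simpa using h3 (by simp at hi; omega)
      · simpa using h1 i (by simp at hi; omega)
    · rintro (_ | i) hi
      · simpa using h4 (by simp at hi; omega)
      · simpa using h2 i (by simp at hi; omega)

theorem isRev01_nil : IsRev01 [] := ⟨revChain_nil, by simp⟩

theorem revChain_map_add_one_iff {l : List ℕ} : RevChain (l.map (· + 1)) ↔ RevChain l := by
  have hget : ∀ i < l.length, (l.map (· + 1))[i]! = l[i]! + 1 := fun i hi => by
    rw [getElem!_pos (l.map _) i (by simpa using hi), getElem!_pos l i hi, List.getElem_map]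
  simp only [RevChain, List.length_map]
  constructor <;> rintro ⟨h1, h2⟩ <;> constructor <;> intro i hi
  all_goals first
    | have := h1 i hi | have := h2 i hi
  all_goals first
    | rw [hget _ (by omega), hget _ (by omega)] at this; omega
    | rw [hget _ (by omega), hget _ (by omega)]; omega

def layer (t k : ℕ) (l : List ℕ) : List ℕ :=
  (List.replicate t [1, 0]).flatten ++ List.replicate k 1 ++ l.map (· + 1)

@[simp]
theorem layer_succ_left (t k : ℕ) (l : List ℕ) : layer (t + 1) k l = 1 :: 0 :: layer t k l := by
  simp [layer, List.replicate_succ]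

@[simp]
theorem layer_zero_succ (k : ℕ) (l : List ℕ) : layer 0 (k + 1) l = 1 :: layer 0 k l := by
  simp [layer, List.replicate_succ]

@[simp]
theorem layer_zero_zero (l : List ℕ) : layer 0 0 l = l.map (· + 1) := by
  simp [layer]

theorem one_le_of_mem_layer_zero {k : ℕ} {l : List ℕ} {x : ℕ} (hx : x ∈ layer 0 k l) : 1 ≤ x := by
  induction k with
  | zero => simp only [layer_zero_zero, List.mem_map] at hx; omega
  | succ k ih =>
    simp only [layer_zero_succ, List.mem_cons] at hx
    rcases hx with rfl | hx
    exacts [le_rfl, ih hx]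

theorem sum_layer (t k : ℕ) (l : List ℕ) : (layer t k l).sum = l.sum + l.length + k + t := by
  induction t with
  | zero => induction k with
    | zero => simp [List.sum_map_add]
    | succ k ih => simp [ih]; omega
  | succ t ih => simp [ih]; omega

theorem length_layer (t k : ℕ) (l : List ℕ) : (layer t k l).length = l.length + k + 2 * t := by
  simp [layer]; ring

theorem count_zero_layer (t k : ℕ) (l : List ℕ) : (layer t k l).count 0 = t := by
  induction t with
  | zero => exact List.count_eq_zero.2 fun h => by have := one_le_of_mem_layer_zero h; omega
  | succ t ih => simp [ih]

theorem revChain_layer_zero {l : List ℕ} (hl : RevChain l) (k : ℕ) : RevChain (layer 0 k l) := by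
  induction k with
  | zero => exact revChain_map_add_one_iff.2 hl
  | succ k ih =>
    rw [layer_zero_succ]
    refine revChain_cons.2 ⟨ih, fun _ => by omega, fun h => ?_⟩
    rw [getElem!_pos (layer 0 k l) 1 h]
    exact one_le_of_mem_layer_zero (List.getElem_mem h)

theorem isRev01_layer {l : List ℕ} (hl : RevChain l) : ∀ t k, IsRev01 (layer t k l)
  | t + 1, k => by
    obtain ⟨hc, hh⟩ := isRev01_layer hl t k
    rw [layer_succ_left]
    refine ⟨revChain_cons.2 ⟨revChain_cons.2 ⟨hc, by simp, by simp⟩, by simp, fun h => ?_⟩,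
      by simp⟩
    simpa using hh (List.ne_nil_of_length_pos (by simpa using h))
  | 0, k => ⟨revChain_layer_zero hl k, fun h => by
      rw [getElem!_pos (layer 0 k l) 0 (List.length_pos_iff.2 h)]
      exact one_le_of_mem_layer_zero (List.getElem_mem _)⟩

theorem one_le_of_revChain {r : List ℕ} (hr : RevChain r) (h0 : r ≠ [] → 2 ≤ r[0]!) :
    ∀ x ∈ r, 1 ≤ x := by
  have key : ∀ i, i < r.length → 1 ≤ r[i]! := by
    intro i
    induction i using Nat.strong_induction_on with
    | _ i ih =>
      intro hi
      match i, ih with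
      | 0, _ => have := h0 (List.ne_nil_of_length_pos hi); omega
      | 1, _ =>
        have := h0 (List.ne_nil_of_length_pos (by omega))
        have := hr.1 0 hi
        simp only [zero_add] at this
        omega
      | i + 2, ih => have := hr.2 i hi; have := ih i (by omega) (by omega); omega
  intro x hx
  obtain ⟨i, hi, rfl⟩ := List.getElem_of_mem hx
  simpa [getElem!_pos r i hi] using key i hi

theorem map_sub_one_map_add_one {r : List ℕ} (h : ∀ x ∈ r, 1 ≤ x) :
    (r.map (· - 1)).map (· + 1) = r := by
  rw [List.map_map]
  refine (List.map_congr_left fun x hx => ?_).trans (List.map_id r)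
  have := h x hx
  simp only [Function.comp_apply, id_eq]
  omega

theorem exists_layer : ∀ r : List ℕ, IsRev01 r → ∃ t k l, IsRev01 l ∧ r = layer t k l
  | [], _ => ⟨0, 0, [], isRev01_nil, rfl⟩
  | 0 :: _, h => absurd (h.2 (by simp)) (by simp)
  | [1], _ => ⟨0, 1, [], isRev01_nil, by simp⟩
  | 1 :: 0 :: r, h => by
    have hr : IsRev01 r := ⟨(revChain_cons.1 (revChain_cons.1 h.1).1).1,
      fun hne => by simpa using h.1.2 0 (by simp [List.length_pos_iff.2 hne])⟩
    obtain ⟨t, k, l, hl, rfl⟩ := exists_layer r hr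
    exact ⟨t + 1, k, l, hl, by simp⟩
  | 1 :: (b + 1) :: r, h => by
    obtain ⟨t, k, l, hl, he⟩ := exists_layer ((b + 1) :: r) ⟨(revChain_cons.1 h.1).1, by simp⟩
    cases t with
    | zero => exact ⟨0, k + 1, l, hl, by simp [he]⟩
    | succ t =>
      -- `1, 1, 0` would violate `r₀ ≤ r₂`
      simp only [layer_succ_left, List.cons.injEq] at he
      obtain ⟨-, rfl⟩ := he
      simpa using h.1.2 0 (by simp)
  | (a + 2) :: r, h => by
    have hpos := one_le_of_revChain h.1 (by simp)
    refine ⟨0, 0, ((a + 2) :: r).map (· - 1), ⟨?_, by simp⟩, ?_⟩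
    · rw [← revChain_map_add_one_iff, map_sub_one_map_add_one hpos]
      exact h.1
    · rw [layer_zero_zero, map_sub_one_map_add_one hpos]

theorem map_add_one_ne_one_cons {l : List ℕ} (hl : IsRev01 l) (s : List ℕ) :
    l.map (· + 1) ≠ 1 :: s := by
  rcases l with _ | ⟨x, l⟩
  · simp
  · have := hl.2 (by simp)
    simp at this ⊢
    omega

theorem layer_zero_inj {k k' : ℕ} {l l' : List ℕ} (hl : IsRev01 l) (hl' : IsRev01 l')
    (h : layer 0 k l = layer 0 k' l') : k = k' ∧ l = l' := by
  induction k generalizing k' with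
  | zero => cases k' with
    | zero => exact ⟨rfl, List.map_injective_iff.2 (add_left_injective 1) (by simpa using h)⟩
    | succ k' => exact absurd (by simpa using h) (map_add_one_ne_one_cons hl _)
  | succ k ih => cases k' with
    | zero => exact absurd (by simpa using h.symm) (map_add_one_ne_one_cons hl' _)
    | succ k' => simpa using ih (by simpa using h)

theorem layer_inj {t t' k k' : ℕ} {l l' : List ℕ} (hl : IsRev01 l) (hl' : IsRev01 l')
    (h : layer t k l = layer t' k' l') : t = t' ∧ k = k' ∧ l = l' := by
  obtain rfl : t = t' := by simpa [count_zero_layer] using congrArg (List.count 0) h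
  induction t with
  | zero => exact ⟨rfl, layer_zero_inj hl hl' h⟩
  | succ t ih => simpa using ih (by simpa using h)

def build : {D : ℕ} → (Fin D → ℕ) → (Fin D → ℕ) → List ℕ
  | 0, _, _ => []
  | _ + 1, T, K => layer (T 0) (K 0) (build (Fin.tail T) (Fin.tail K))

theorem isRev01_build : ∀ {D : ℕ} (T K : Fin D → ℕ), IsRev01 (build T K)
  | 0, _, _ => isRev01_nil
  | _ + 1, T, K => isRev01_layer (isRev01_build (Fin.tail T) (Fin.tail K)).1 _ _

theorem length_build : ∀ {D : ℕ} (T K : Fin D → ℕ), (build T K).length = ∑ i, (2 * T i + K i)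
  | 0, _, _ => rfl
  | _ + 1, T, K => by
    rw [build, length_layer, length_build, Fin.sum_univ_succ]
    simp only [Fin.tail]
    ring

theorem sum_build : ∀ {D : ℕ} (T K : Fin D → ℕ),
    (build T K).sum = ∑ i, T i * (2 * i + 1) + ∑ i, K i * (i + 1)
  | 0, _, _ => by simp [build]
  | _ + 1, T, K => by
    rw [build, sum_layer, sum_build, length_build, Fin.sum_univ_succ,
      Fin.sum_univ_succ (f := fun i => K i * _)]
    have hT (i : Fin _) :
        T i.succ * (2 * (i + 1) + 1) = T i.succ * (2 * i + 1) + 2 * T i.succ := by ring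
    have hK (i : Fin _) : K i.succ * (i + 1 + 1) = K i.succ * (i + 1) + K i.succ := by ring
    simp only [Fin.tail, Fin.val_succ, Fin.val_zero, hT, hK, Finset.sum_add_distrib]
    ring

theorem build_injective : ∀ {D : ℕ} {T K T' K' : Fin D → ℕ},
    build T K = build T' K' → T = T' ∧ K = K'
  | 0, _, _, _, _, _ => ⟨Subsingleton.elim _ _, Subsingleton.elim _ _⟩
  | _ + 1, T, K, T', K', h => by
    obtain ⟨h0, h1, h2⟩ := layer_inj (isRev01_build _ _) (isRev01_build _ _) h
    obtain ⟨hT, hK⟩ := build_injective h2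
    rw [← Fin.cons_self_tail T, ← Fin.cons_self_tail K, ← Fin.cons_self_tail T',
      ← Fin.cons_self_tail K', h0, h1, hT, hK]
    exact ⟨rfl, rfl⟩

theorem exists_build : ∀ (D : ℕ) {r : List ℕ}, IsRev01 r → r.sum ≤ D →
    ∃ T K : Fin D → ℕ, build T K = r
  | 0, r, hr, hs => ⟨0, 0, by
      rcases r with _ | ⟨x, r⟩
      · rfl
      · have := hr.2 (by simp); simp at this hs; omega⟩
  | D + 1, r, hr, hs => by
    obtain ⟨t, k, l, hl, rfl⟩ := exists_layer r hr
    have hlen : 0 < l.sum → 0 < l.length := fun h =>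
      List.length_pos_iff.2 (by rintro rfl; simp at h)
    rw [sum_layer] at hs
    obtain ⟨T, K, rfl⟩ := exists_build D hl (by omega)
    exact ⟨Fin.cons t T, Fin.cons k K, by simp [build]⟩

/-- `f (inl i)` counts the pairs `1, 0` and `f (inr i)` the single entries `1` of layer `i` of
`build`. -/
def partWeight (D : ℕ) : Fin D ⊕ Fin D → ℕ := Sum.elim (fun i => 2 * i + 1) (fun i => i + 1)

theorem sum_build_comp_inl_inr {D : ℕ} (f : Fin D ⊕ Fin D → ℕ) :
    (build (f ∘ Sum.inl) (f ∘ Sum.inr)).sum = ∑ i, f i * partWeight D i := by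
  rw [sum_build, Fintype.sum_sum_type]
  rfl

theorem j01_eq_card {m D : ℕ} (hm : m ≤ D) :
    j01 m = Nat.card {f : Fin D ⊕ Fin D → ℕ // ∑ i, f i * partWeight D i = m} := by
  let φ (f : {f : Fin D ⊕ Fin D → ℕ // ∑ i, f i * partWeight D i = m}) :
      {l : List ℕ // Is01 l ∧ l.sum = m} :=
    ⟨(build (f.1 ∘ Sum.inl) (f.1 ∘ Sum.inr)).reverse,
      (is01_iff_isRev01_reverse _).2 (by simpa using isRev01_build _ _),
      by rw [List.sum_reverse, sum_build_comp_inl_inr, f.2]⟩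
  refine (Nat.card_congr (Equiv.ofBijective φ ⟨fun f g h => ?_, fun l => ?_⟩)).symm
  · obtain ⟨h1, h2⟩ := build_injective (List.reverse_injective (congrArg Subtype.val h))
    ext (i | i)
    exacts [congrFun h1 i, congrFun h2 i]
  · obtain ⟨l, hl, rfl⟩ := l
    obtain ⟨T, K, hTK⟩ := exists_build D ((is01_iff_isRev01_reverse l).1 hl) (by simpa using hm)
    refine ⟨⟨Sum.elim T K, ?_⟩, Subtype.ext ?_⟩
    · rw [← sum_build_comp_inl_inr]
      simp [hTK]
    · simp [φ, hTK]

section GeneratingFunction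

open PowerSeries Finset

variable {R : Type*} [CommRing R]

theorem mk_j01_sModEq (N : ℕ) :
    (mk fun m => (j01 m : R)) ≡
      (∏ k ∈ range N, expand (2 * k + 1) (2 * k).succ_ne_zero (mk 1)) *
        ∏ k ∈ range N, expand (k + 1) k.succ_ne_zero (mk 1) [SMOD Ideal.span {X ^ N}] := by
  have hw (i : Fin N ⊕ Fin N) : partWeight N i ≠ 0 := by cases i <;> simp [partWeight]
  have hprod : ∏ i, expand (partWeight N i) (hw i) (mk 1 : R⟦X⟧) =
      (∏ k ∈ range N, expand (2 * k + 1) (2 * k).succ_ne_zero (mk 1)) *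
        ∏ k ∈ range N, expand (k + 1) k.succ_ne_zero (mk 1) := by
    rw [Fintype.prod_sum_type]
    exact congrArg₂ (· * ·)
      (Fin.prod_univ_eq_prod_range (fun k => expand (2 * k + 1) (2 * k).succ_ne_zero (mk 1)) N)
      (Fin.prod_univ_eq_prod_range (fun k => expand (k + 1) k.succ_ne_zero (mk 1)) N)
  rw [sModEq_span_X_pow_iff]
  intro m hm
  rw [← hprod, coeff_prod_expand_mk_one, coeff_mk, j01_eq_card hm.le]

end GeneratingFunction

end JaggedPartition

open JaggedPartition PowerSeries

/-- Stated coefficient-wise after clearing denominators: factors with exponent `> n` do not affect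
the coefficient of `qⁿ`. -/
theorem jagged_genFun (n : ℕ) :
    PowerSeries.coeff (R := ℤ) n
        ((∏ k ∈ Finset.range (n + 1), (1 - (PowerSeries.X : PowerSeries ℤ) ^ (k + 1))) *
          PowerSeries.mk fun m => (j01 m : ℤ))
      = PowerSeries.coeff (R := ℤ) n
        (∏ k ∈ Finset.range (n + 1), (1 + (PowerSeries.X : PowerSeries ℤ) ^ (k + 1))) := by
  set N := n + 1
  set Godd : ℤ⟦X⟧ := ∏ k ∈ Finset.range N, expand (2 * k + 1) (2 * k).succ_ne_zero (mk 1)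
  have hall := prod_one_sub_X_pow_mul_prod_expand_mk_one (R := ℤ) (Finset.range N) (· + 1)
    Nat.succ_ne_zero
  have hodd := prod_one_sub_X_pow_mul_prod_expand_mk_one (R := ℤ) (Finset.range N) (2 * · + 1)
    fun k => (2 * k).succ_ne_zero
  have htail := prod_one_sub_X_pow_sModEq_one (R := ℤ) (N := N) (Finset.range N) (N + · + 1)
    fun k _ => by omega
  refine sModEq_span_X_pow_iff.1 ?_ n n.lt_succ_self
  calc (∏ k ∈ Finset.range N, (1 - X ^ (k + 1))) * mk (fun m => (j01 m : ℤ))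
      ≡ (∏ k ∈ Finset.range N, (1 - X ^ (k + 1))) *
          (Godd * ∏ k ∈ Finset.range N, expand (k + 1) k.succ_ne_zero (mk 1))
          [SMOD Ideal.span {X ^ N}] := SModEq.rfl.mul (mk_j01_sModEq N)
    _ = 1 * Godd := by rw [mul_comm Godd, ← mul_assoc, hall]
    _ ≡ (∏ k ∈ Finset.range N, (1 - X ^ (N + k + 1))) * Godd [SMOD Ideal.span {X ^ N}] :=
        htail.symm.mul SModEq.rfl
    _ = ∏ k ∈ Finset.range N, (1 + X ^ (k + 1)) := by
        rw [← prod_one_add_pow_mul_prod_one_sub_odd_pow, mul_assoc, hodd, mul_one]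
end

section
/- The counting functions satisfy the coupled recurrences j(m,n) = j(m-2, n-1) + k(m,n) and k(m,n) = k(m-1, n-1) + j(m, n-m), where k(m,n) counts 01-partitions of n with m parts all of which are ≥ 1. -/
/-- `j2 m n` is the number of 01-partitions of weight `n` with exactly `m` parts. -/
noncomputable def j2 (m n : ℕ) : ℕ :=
  Nat.card {l : List ℕ // Is01 l ∧ l.length = m ∧ l.sum = n}

/-- `k2 m n` is the number of 01-partitions of weight `n` with exactly `m` parts,
all of which are `≥ 1`. -/
noncomputable def k2 (m n : ℕ) : ℕ :=
  Nat.card {l : List ℕ // Is01 l ∧ l.length = m ∧ l.sum = n ∧ ∀ x ∈ l, 1 ≤ x}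

theorem gE {l : List ℕ} {i : ℕ} (h : i < l.length) : l[i]! = l[i] := getElem!_pos l i h

theorem myLast (l : List ℕ) (h : l ≠ []) : l.getLast! = l.getLast h :=
  List.getLast!_of_getLast? (List.getLast?_eq_getLast h)

theorem myLast2 (l : List ℕ) (h : l ≠ []) :
    l.getLast! = l[l.length - 1]'(by have := List.length_pos_iff.2 h; omega) := by
  rw [myLast l h, List.getLast_eq_getElem]

theorem myLast3 (l : List ℕ) (h : l ≠ []) : l.getLast! = l[l.length - 1]! := by
  rw [myLast2 l h, gE]

theorem gapp₁ (l t : List ℕ) (i : ℕ) (h : i < l.length) : (l ++ t)[i]! = l[i]! := by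
  rw [gE (by simp; omega), gE h, List.getElem_append_left]

theorem gapp₂ (l t : List ℕ) (i : ℕ) (h : i < t.length) : (l ++ t)[l.length + i]! = t[i]! := by
  rw [gE (by simp; omega), gE h]
  rw [List.getElem_append_right (by omega)]
  congr 1
  omega

theorem gmap (f : ℕ → ℕ) (l : List ℕ) (i : ℕ) (h : i < l.length) :
    (l.map f)[i]! = f l[i]! := by
  rw [gE (by simp [h]), gE h, List.getElem_map]

theorem map_last (f : ℕ → ℕ) (l : List ℕ) (h : l ≠ []) :
    (l.map f).getLast! = f l.getLast! := by
  have h2 : l.map f ≠ [] := by simp [h]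
  rw [myLast3 _ h, myLast3 _ h2, List.length_map, gmap f l _ (by have := List.length_pos_iff.2 h; omega)]

theorem getLast!_concat (l : List ℕ) (a : ℕ) : (l ++ [a]).getLast! = a := by
  have h : l ++ [a] ≠ [] := by simp
  rw [myLast3 _ h]
  have e : (l ++ [a]).length - 1 = l.length + 0 := by simp
  rw [e, gapp₂ l [a] 0 (by simp)]
  rfl

theorem sum_map_succ (l : List ℕ) : (l.map (· + 1)).sum = l.sum + l.length := by
  induction l with
  | nil => simp
  | cons a t ih => simp [ih]; omega

theorem len_le_sum (l : List ℕ) (h : ∀ x ∈ l, 1 ≤ x) : l.length ≤ l.sum := by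
  induction l with
  | nil => simp
  | cons a t ih =>
    simp only [List.length_cons, List.sum_cons]
    have := h a (by simp)
    have := ih (fun x hx => h x (by simp [hx]))
    omega

theorem decomp2 (l : List ℕ) (h : 2 ≤ l.length) :
    l = l.take (l.length - 2) ++ [l[l.length - 2]!, l[l.length - 1]!] := by
  conv_lhs => rw [← List.take_append_drop (l.length - 2) l]
  congr 1
  have e1 : l.drop (l.length - 2) = l[l.length - 2] :: l.drop (l.length - 1) := by
    rw [List.drop_eq_getElem_cons (by omega)]
    have e : l.length - 2 + 1 = l.length - 1 := by omega
    rw [e]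
  have e2 : l.drop (l.length - 1) = [l[l.length - 1]] := by
    rw [List.drop_eq_getElem_cons (by omega)]
    congr 1
    have : l.length - 1 + 1 = l.length := by omega
    rw [this, List.drop_length]
  rw [e1, e2, gE (by omega), gE (by omega)]

theorem decomp1 (l : List ℕ) (h : 1 ≤ l.length) :
    l = l.take (l.length - 1) ++ [l[l.length - 1]!] := by
  conv_lhs => rw [← List.take_append_drop (l.length - 1) l]
  congr 1
  have e2 : l.drop (l.length - 1) = [l[l.length - 1]] := by
    rw [List.drop_eq_getElem_cons (by omega)]
    congr 1
    have : l.length - 1 + 1 = l.length := by omega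
    rw [this, List.drop_length]
  rw [e2, gE (by omega)]

theorem append01 (l : List ℕ) : Is01 (l ++ [0, 1]) ↔ Is01 l := by
  have hlen : (l ++ [0, 1]).length = l.length + 2 := by simp
  constructor
  · rintro ⟨h1, h2, -⟩
    refine ⟨?_, ?_, ?_⟩
    · intro i hi
      have t := h1 i (by omega)
      rwa [gapp₁ l [0,1] (i+1) hi, gapp₁ l [0,1] i (by omega)] at t
    · intro i hi
      have t := h2 i (by omega)
      rwa [gapp₁ l [0,1] (i+2) hi, gapp₁ l [0,1] i (by omega)] at t
    · intro hne
      have hL : 1 ≤ l.length := List.length_pos_iff.2 hne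
      have t := h2 (l.length - 1) (by omega)
      have eidx : l.length - 1 + 2 = l.length + 1 := by omega
      rw [eidx] at t
      have e1 : (l ++ [0, 1])[l.length + 1]! = (1 : ℕ) := by
        have := gapp₂ l [0,1] 1 (by simp)
        simpa using this
      rw [e1, gapp₁ l [0,1] (l.length - 1) (by omega)] at t
      rw [myLast3 l hne]
      exact t
  · rintro ⟨h1, h2, h3⟩
    have hz : (l ++ [0, 1])[l.length + 0]! = (0 : ℕ) := by
      rw [gapp₂ l [0,1] 0 (by simp)]; rfl
    have ho : (l ++ [0, 1])[l.length + 1]! = (1 : ℕ) := by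
      rw [gapp₂ l [0,1] 1 (by simp)]; rfl
    refine ⟨?_, ?_, ?_⟩
    · intro i hi
      rw [hlen] at hi
      rcases (show i + 1 < l.length ∨ i + 1 = l.length + 0 ∨ (i = l.length + 0 ∧ i + 1 = l.length + 1) by omega) with h | h | ⟨ha, hb⟩
      · rw [gapp₁ l [0,1] (i+1) h, gapp₁ l [0,1] i (by omega)]
        exact h1 i h
      · rw [h, hz]; omega
      · rw [hb, ho, ha, hz]
    · intro i hi
      rw [hlen] at hi
      rcases (show i + 2 < l.length ∨ i + 2 = l.length + 0 ∨ i + 2 = l.length + 1 by omega) with h | h | h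
      · rw [gapp₁ l [0,1] (i+2) h, gapp₁ l [0,1] i (by omega)]
        exact h2 i h
      · rw [h, hz]; omega
      · have hne : l ≠ [] := by
          have : 0 < l.length := by omega
          exact List.length_pos_iff.1 this
        rw [h, ho, gapp₁ l [0,1] i (by omega)]
        have hi' : i = l.length - 1 := by omega
        rw [hi', ← myLast3 l hne]
        exact h3 hne
    · intro _
      have hne : l ++ [0,1] ≠ [] := by simp
      rw [myLast3 _ hne]
      have e : (l ++ [0,1]).length - 1 = l.length + 1 := by rw [hlen]; omega
      rw [e, ho]

theorem append_one (l : List ℕ) (hpos : ∀ x ∈ l, 1 ≤ x) : Is01 (l ++ [1]) ↔ Is01 l := by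
  have hlen : (l ++ [1]).length = l.length + 1 := by simp
  have ho : (l ++ [1])[l.length + 0]! = (1 : ℕ) := by
    rw [gapp₂ l [1] 0 (by simp)]; rfl
  constructor
  · rintro ⟨h1, h2, -⟩
    refine ⟨?_, ?_, ?_⟩
    · intro i hi
      have t := h1 i (by omega)
      rwa [gapp₁ l [1] (i+1) hi, gapp₁ l [1] i (by omega)] at t
    · intro i hi
      have t := h2 i (by omega)
      rwa [gapp₁ l [1] (i+2) hi, gapp₁ l [1] i (by omega)] at t
    · intro hne
      have hL : 1 ≤ l.length := List.length_pos_iff.2 hne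
      rw [myLast3 l hne, gE (by omega)]
      exact hpos _ (l.getElem_mem _)
  · rintro ⟨h1, h2, h3⟩
    refine ⟨?_, ?_, ?_⟩
    · intro i hi
      rw [hlen] at hi
      rcases (show i + 1 < l.length ∨ i + 1 = l.length + 0 by omega) with h | h
      · rw [gapp₁ l [1] (i+1) h, gapp₁ l [1] i (by omega)]
        exact h1 i h
      · rw [h, ho]; omega
    · intro i hi
      rw [hlen] at hi
      rcases (show i + 2 < l.length ∨ i + 2 = l.length + 0 by omega) with h | h
      · rw [gapp₁ l [1] (i+2) h, gapp₁ l [1] i (by omega)]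
        exact h2 i h
      · rw [h, ho, gapp₁ l [1] i (by omega), gE (by omega)]
        exact hpos _ (l.getElem_mem _)
    · intro _
      have := getLast!_concat l 1
      omega

theorem is01_map_succ (l : List ℕ) (h : Is01 l) : Is01 (l.map (· + 1)) := by
  obtain ⟨h1, h2, h3⟩ := h
  refine ⟨?_, ?_, ?_⟩
  · intro i hi
    rw [List.length_map] at hi
    rw [gmap _ _ _ hi, gmap _ _ _ (by omega)]
    have := h1 i hi
    omega
  · intro i hi
    rw [List.length_map] at hi
    rw [gmap _ _ _ hi, gmap _ _ _ (by omega)]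
    have := h2 i hi
    omega
  · intro hne
    have hne' : l ≠ [] := by simpa using hne
    rw [map_last _ _ hne']
    omega

theorem is01_map_pred (l : List ℕ) (h : Is01 l) (hpos : ∀ x ∈ l, 1 ≤ x)
    (hlast : 2 ≤ l.getLast!) :
    Is01 (l.map (· - 1)) ∧ l = (l.map (· - 1)).map (· + 1) := by
  obtain ⟨h1, h2, h3⟩ := h
  constructor
  · refine ⟨?_, ?_, ?_⟩
    · intro i hi
      rw [List.length_map] at hi
      rw [gmap _ _ _ hi, gmap _ _ _ (by omega)]
      have := h1 i hi
      have hp : 1 ≤ l[i]! := by rw [gE (by omega)]; exact hpos _ (l.getElem_mem _)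
      omega
    · intro i hi
      rw [List.length_map] at hi
      rw [gmap _ _ _ hi, gmap _ _ _ (by omega)]
      have := h2 i hi
      omega
    · intro hne
      have hne' : l ≠ [] := by simpa using hne
      rw [map_last _ _ hne']
      omega
  · rw [List.map_map]
    conv_lhs => rw [← List.map_id l]
    apply List.map_congr_left
    intro x hx
    have := hpos x hx
    simp
    omega

theorem zero_descent (l : List ℕ) (h : Is01 l) :
    ∀ k i, i < l.length → l.length - i ≤ k → l[i]! = 0 →
      2 ≤ l.length ∧ l[l.length - 2]! = 0 ∧ l[l.length - 1]! = 1 := by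
  obtain ⟨h1, h2, h3⟩ := h
  have hlast : ∀ (_ : l ≠ []), 1 ≤ l[l.length - 1]! := by
    intro hne
    rw [← myLast3 l hne]
    exact h3 hne
  intro k
  induction k with
  | zero => intro i hi hk; omega
  | succ k IH =>
    intro i hi hk hz
    by_cases hc : i + 2 < l.length
    · have t := h2 i hc
      rw [hz] at t
      exact IH (i + 2) hc (by omega) (by omega)
    · have hne : l ≠ [] := List.length_pos_iff.1 (by omega)
      have hl1 := hlast hne
      have hne1 : i ≠ l.length - 1 := by
        intro e
        rw [e] at hz
        omega
      have hi' : i = l.length - 2 := by omega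
      have hL2 : 2 ≤ l.length := by omega
      refine ⟨hL2, by rw [← hi']; exact hz, ?_⟩
      have t := h1 (l.length - 2) (by omega)
      have e : l.length - 2 + 1 = l.length - 1 := by omega
      rw [e] at t
      rw [← hi', hz] at t
      omega

theorem finite_main (m n : ℕ) : {l : List ℕ | l.length = m ∧ l.sum = n}.Finite := by
  have hsub : {l : List ℕ | l.length = m ∧ l.sum = n} ⊆
      (fun L : List (Fin (n + 1)) => L.map Fin.val) '' {L : List (Fin (n + 1)) | L.length = m} := by
    rintro l ⟨h1, h2⟩
    refine ⟨l.attach.map (fun x => (⟨x.1, ?_⟩ : Fin (n + 1))), by simpa using h1, ?_⟩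
    · have : x.1 ≤ l.sum := List.single_le_sum (fun y _ => Nat.zero_le y) _ x.2
      omega
    · simp [List.map_map]
  exact ((List.finite_length_eq (Fin (n + 1)) m).image _).subset hsub

theorem finite_sub (P : List ℕ → Prop) (m n : ℕ) (h : ∀ l, P l → l.length = m ∧ l.sum = n) :
    Finite {l : List ℕ // P l} := by
  have : {l : List ℕ | P l} ⊆ {l | l.length = m ∧ l.sum = n} := fun l hl => h l hl
  exact ((finite_main m n).subset this).to_subtype

open Classical in
noncomputable def orEquiv {α : Type*} (q r : α → Prop) (hd : ∀ x, q x → r x → False) :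
    {x // q x ∨ r x} ≃ {x // q x} ⊕ {x // r x} where
  toFun x := if h : q x.1 then .inl ⟨x.1, h⟩ else .inr ⟨x.1, x.2.resolve_left h⟩
  invFun := Sum.elim (fun y => ⟨y.1, Or.inl y.2⟩) (fun y => ⟨y.1, Or.inr y.2⟩)
  left_inv x := by by_cases h : q x.1 <;> simp [h]
  right_inv y := by
    rcases y with y | y
    · simp [y.2]
    · have : ¬ q y.1 := fun h => hd _ h y.2
      simp [this]

theorem card_split {α : Type*} (p q r : α → Prop) (hpq : ∀ x, p x ↔ q x ∨ r x)
    (hd : ∀ x, q x → r x → False) [Finite {x // q x}] [Finite {x // r x}] :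
    Nat.card {x // p x} = Nat.card {x // q x} + Nat.card {x // r x} := by
  rw [← Nat.card_sum]
  exact Nat.card_congr ((Equiv.subtypeEquivRight hpq).trans (orEquiv q r hd))

theorem card_R1 (m n : ℕ) (hm : 2 ≤ m) (hn : 1 ≤ n) :
    Nat.card {l : List ℕ // Is01 l ∧ l.length = m ∧ l.sum = n ∧ ¬ ∀ x ∈ l, 1 ≤ x} =
      Nat.card {l : List ℕ // Is01 l ∧ l.length = m - 2 ∧ l.sum = n - 1} := by
  have key : ∀ x : {l : List ℕ // Is01 l ∧ l.length = m - 2 ∧ l.sum = n - 1},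
      Is01 (x.1 ++ [0, 1]) ∧ (x.1 ++ [0, 1]).length = m ∧ (x.1 ++ [0, 1]).sum = n ∧
        ¬ ∀ y ∈ x.1 ++ [0, 1], 1 ≤ y := by
    rintro ⟨l, h1, h2, h3⟩
    refine ⟨(append01 l).mpr h1, by simp; omega, by simp; omega, ?_⟩
    intro hall
    have := hall 0 (by simp)
    omega
  refine (Nat.card_eq_of_bijective (fun x => ⟨x.1 ++ [0, 1], key x⟩) ⟨?_, ?_⟩).symm
  · rintro ⟨a, ha⟩ ⟨b, hb⟩ hab
    have h : a ++ [0, 1] = b ++ [0, 1] := congrArg Subtype.val hab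
    exact Subtype.ext (List.append_inj h (by rw [ha.2.1, hb.2.1])).1
  · rintro ⟨l, hI, hlen, hsum, hnall⟩
    push_neg at hnall
    obtain ⟨x, hx, hx0⟩ := hnall
    obtain ⟨i, hi, hei⟩ := List.mem_iff_getElem.mp hx
    have hz : l[i]! = 0 := by rw [gE hi, hei]; omega
    obtain ⟨hL2, hz2, hz1⟩ := zero_descent l hI l.length i hi (by omega) hz
    set l' := l.take (l.length - 2) with hl'
    have decomp : l = l' ++ [0, 1] := by
      have := decomp2 l hL2
      rwa [hz2, hz1] at this
    have hI' : Is01 (l' ++ [0, 1]) := by rw [← decomp]; exact hI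
    have hlen' : l'.length = m - 2 := by
      rw [hl', List.length_take]; omega
    have hsum' : l'.sum = n - 1 := by
      have := congrArg List.sum decomp
      simp at this
      omega
    exact ⟨⟨l', (append01 l').mp hI', hlen', hsum'⟩, Subtype.ext decomp.symm⟩

theorem card_R2a (m n : ℕ) (hm : 1 ≤ m) (hn : 1 ≤ n) :
    Nat.card {l : List ℕ // (Is01 l ∧ l.length = m ∧ l.sum = n ∧ ∀ x ∈ l, 1 ≤ x) ∧ l.getLast! = 1} =
      Nat.card {l : List ℕ // Is01 l ∧ l.length = m - 1 ∧ l.sum = n - 1 ∧ ∀ x ∈ l, 1 ≤ x} := by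
  have key : ∀ x : {l : List ℕ // Is01 l ∧ l.length = m - 1 ∧ l.sum = n - 1 ∧ ∀ x ∈ l, 1 ≤ x},
      (Is01 (x.1 ++ [1]) ∧ (x.1 ++ [1]).length = m ∧ (x.1 ++ [1]).sum = n ∧
        ∀ y ∈ x.1 ++ [1], 1 ≤ y) ∧ (x.1 ++ [1]).getLast! = 1 := by
    rintro ⟨l, h1, h2, h3, h4⟩
    refine ⟨⟨(append_one l h4).mpr h1, by simp; omega, by simp; omega, ?_⟩, getLast!_concat l 1⟩
    intro y hy
    rcases List.mem_append.mp hy with h | h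
    · exact h4 y h
    · simp at h; omega
  refine (Nat.card_eq_of_bijective (fun x => ⟨x.1 ++ [1], key x⟩) ⟨?_, ?_⟩).symm
  · rintro ⟨a, ha⟩ ⟨b, hb⟩ hab
    have h : a ++ [1] = b ++ [1] := congrArg Subtype.val hab
    exact Subtype.ext (List.append_inj h (by rw [ha.2.1, hb.2.1])).1
  · rintro ⟨l, ⟨hI, hlen, hsum, hpos⟩, hlast⟩
    have hL1 : 1 ≤ l.length := by omega
    have hne : l ≠ [] := List.length_pos_iff.1 (by omega)
    set l' := l.take (l.length - 1) with hl'
    have decomp : l = l' ++ [1] := by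
      have := decomp1 l hL1
      rwa [← myLast3 l hne, hlast] at this
    have hpos' : ∀ x ∈ l', 1 ≤ x := fun x hx => hpos x (List.take_subset _ _ hx)
    have hI' : Is01 (l' ++ [1]) := by rw [← decomp]; exact hI
    have hlen' : l'.length = m - 1 := by rw [hl', List.length_take]; omega
    have hsum' : l'.sum = n - 1 := by
      have := congrArg List.sum decomp
      simp at this
      omega
    exact ⟨⟨l', (append_one l' hpos').mp hI', hlen', hsum', hpos'⟩, Subtype.ext decomp.symm⟩

theorem card_R2b (m n : ℕ) (hm : 1 ≤ m) (hmn : m ≤ n) :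
    Nat.card {l : List ℕ // (Is01 l ∧ l.length = m ∧ l.sum = n ∧ ∀ x ∈ l, 1 ≤ x) ∧ 2 ≤ l.getLast!} =
      Nat.card {l : List ℕ // Is01 l ∧ l.length = m ∧ l.sum = n - m} := by
  have key : ∀ x : {l : List ℕ // Is01 l ∧ l.length = m ∧ l.sum = n - m},
      (Is01 (x.1.map (· + 1)) ∧ (x.1.map (· + 1)).length = m ∧ (x.1.map (· + 1)).sum = n ∧
        ∀ y ∈ x.1.map (· + 1), 1 ≤ y) ∧ 2 ≤ (x.1.map (· + 1)).getLast! := by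
    rintro ⟨l, h1, h2, h3⟩
    have hne : l ≠ [] := List.length_pos_iff.1 (by omega)
    refine ⟨⟨is01_map_succ l h1, by simpa using h2, by rw [sum_map_succ]; show l.sum + l.length = n; omega, ?_⟩, ?_⟩
    · intro y hy
      obtain ⟨z, -, rfl⟩ := List.mem_map.mp hy
      omega
    · rw [map_last _ _ hne]
      have := h1.2.2 hne
      omega
  refine (Nat.card_eq_of_bijective (fun x => ⟨x.1.map (· + 1), key x⟩) ⟨?_, ?_⟩).symm
  · rintro ⟨a, ha⟩ ⟨b, hb⟩ hab
    have h : a.map (· + 1) = b.map (· + 1) := congrArg Subtype.val hab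
    exact Subtype.ext ((List.map_injective_iff.mpr (fun u v huv => by omega)) h)
  · rintro ⟨l, ⟨hI, hlen, hsum, hpos⟩, hlast⟩
    obtain ⟨hI', hdec⟩ := is01_map_pred l hI hpos hlast
    have hlen' : (l.map (· - 1)).length = m := by simpa using hlen
    have hsum' : (l.map (· - 1)).sum = n - m := by
      have := congrArg List.sum hdec
      rw [sum_map_succ] at this
      have hll := hlen'
      omega
    exact ⟨⟨l.map (· - 1), hI', hlen', hsum'⟩, Subtype.ext hdec.symm⟩

/-- The coupled recurrences `j(m,n) = j(m-2,n-1) + k(m,n)` and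
`k(m,n) = k(m-1,n-1) + j(m,n-m)`. -/
theorem jagged_coupled_recurrences (m n : ℕ) :
    (2 ≤ m → 1 ≤ n → j2 m n = j2 (m - 2) (n - 1) + k2 m n) ∧
    (1 ≤ m → 1 ≤ n → k2 m n = k2 (m - 1) (n - 1) + j2 m (n - m)) := by
  constructor
  · intro hm hn
    haveI F1 : Finite {l : List ℕ // Is01 l ∧ l.length = m ∧ l.sum = n ∧ ¬ ∀ x ∈ l, 1 ≤ x} :=
      finite_sub _ m n (fun l h => ⟨h.2.1, h.2.2.1⟩)
    haveI F2 : Finite {l : List ℕ // Is01 l ∧ l.length = m ∧ l.sum = n ∧ ∀ x ∈ l, 1 ≤ x} :=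
      finite_sub _ m n (fun l h => ⟨h.2.1, h.2.2.1⟩)
    have hsplit := card_split (fun l : List ℕ => Is01 l ∧ l.length = m ∧ l.sum = n)
      (fun l => Is01 l ∧ l.length = m ∧ l.sum = n ∧ ¬ ∀ x ∈ l, 1 ≤ x)
      (fun l => Is01 l ∧ l.length = m ∧ l.sum = n ∧ ∀ x ∈ l, 1 ≤ x)
      (fun l => by tauto) (fun l hq hr => hq.2.2.2 hr.2.2.2)
    show Nat.card _ = Nat.card _ + Nat.card _
    rw [hsplit, card_R1 m n hm hn]
  · intro hm hn
    haveI F1 : Finite {l : List ℕ //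
        (Is01 l ∧ l.length = m ∧ l.sum = n ∧ ∀ x ∈ l, 1 ≤ x) ∧ l.getLast! = 1} :=
      finite_sub _ m n (fun l h => ⟨h.1.2.1, h.1.2.2.1⟩)
    haveI F2 : Finite {l : List ℕ //
        (Is01 l ∧ l.length = m ∧ l.sum = n ∧ ∀ x ∈ l, 1 ≤ x) ∧ 2 ≤ l.getLast!} :=
      finite_sub _ m n (fun l h => ⟨h.1.2.1, h.1.2.2.1⟩)
    have hsplit := card_split (fun l : List ℕ => Is01 l ∧ l.length = m ∧ l.sum = n ∧ ∀ x ∈ l, 1 ≤ x)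
      (fun l => (Is01 l ∧ l.length = m ∧ l.sum = n ∧ ∀ x ∈ l, 1 ≤ x) ∧ l.getLast! = 1)
      (fun l => (Is01 l ∧ l.length = m ∧ l.sum = n ∧ ∀ x ∈ l, 1 ≤ x) ∧ 2 ≤ l.getLast!)
      (fun l => by
        constructor
        · intro h
          have hne : l ≠ [] := List.length_pos_iff.1 (by rw [h.2.1]; omega)
          have hl := h.1.2.2 hne
          by_cases he : l.getLast! = 1
          · exact Or.inl ⟨h, he⟩
          · exact Or.inr ⟨h, by omega⟩
        · rintro (h | h) <;> exact h.1)
      (fun l hq hr => by have := hq.2; have := hr.2; omega)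
    show Nat.card _ = Nat.card _ + Nat.card _
    rw [hsplit, card_R2a m n hm hn]
    congr 1
    by_cases hmn : m ≤ n
    · exact card_R2b m n hm hmn
    · have e1 : Nat.card {l : List ℕ //
          (Is01 l ∧ l.length = m ∧ l.sum = n ∧ ∀ x ∈ l, 1 ≤ x) ∧ 2 ≤ l.getLast!} = 0 := by
        have : IsEmpty {l : List ℕ //
            (Is01 l ∧ l.length = m ∧ l.sum = n ∧ ∀ x ∈ l, 1 ≤ x) ∧ 2 ≤ l.getLast!} := by
          refine ⟨?_⟩
          rintro ⟨l, ⟨hI, hlen, hsum, hpos⟩, -⟩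
          have := len_le_sum l hpos
          omega
        exact Nat.card_of_isEmpty
      have e2 : Nat.card {l : List ℕ // Is01 l ∧ l.length = m ∧ l.sum = n - m} = 0 := by
        have : IsEmpty {l : List ℕ // Is01 l ∧ l.length = m ∧ l.sum = n - m} := by
          refine ⟨?_⟩
          rintro ⟨l, hI, hlen, hsum⟩
          have hne : l ≠ [] := List.length_pos_iff.1 (by omega)
          have hL : 1 ≤ l.length := by omega
          have h1 : 1 ≤ l[l.length - 1]! := by rw [← myLast3 l hne]; exact hI.2.2 hne
          have hmem : l[l.length - 1] ∈ l := l.getElem_mem (by omega)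
          have hle : l[l.length - 1] ≤ l.sum :=
            List.single_le_sum (fun y _ => Nat.zero_le y) _ hmem
          rw [gE (by omega)] at h1
          omega
        exact Nat.card_of_isEmpty
      rw [e1, e2]
end

section
/- The number of 01-partitions of n with at most m parts equals j(m, n+m) - j(m-2, n+m-1), and also equals k(m, n+m). -/
/-- `jle m n` is the number of 01-partitions of `n` with at most `m` parts. -/
noncomputable def jle (m n : ℕ) : ℕ :=
  Nat.card {l : List ℕ // Is01 l ∧ l.length ≤ m ∧ l.sum = n}

namespace J01
theorem getE (l : List ℕ) (i : ℕ) : l[i]! = (l[i]?).getD 0 := by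
  rcases Nat.lt_or_ge i l.length with h | h
  · rw [getElem!_pos l i h, List.getElem?_eq_getElem h]; rfl
  · rw [getElem!_neg l i (Nat.not_lt.2 h), List.getElem?_eq_none (by simpa using h)]; rfl

theorem getE_big (l : List ℕ) (i : ℕ) (h : l.length ≤ i) : l[i]! = 0 := by
  rw [getE, List.getElem?_eq_none (by simpa using h)]; rfl

theorem getE_pad (l : List ℕ) (k i : ℕ) : (l ++ List.replicate k 0)[i]! = l[i]! := by
  rw [getE, getE, List.getElem?_append]
  split
  · rfl
  · rw [List.getElem?_replicate]
    rcases Nat.lt_or_ge i l.length with h | h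
    · omega
    · rw [List.getElem?_eq_none (by simpa using h)]; split <;> rfl

theorem getE_map_sub (l : List ℕ) (i : ℕ) : (l.map (· - 1))[i]! = l[i]! - 1 := by
  rw [getE, getE, List.getElem?_map]
  cases l[i]? <;> rfl

theorem getE_map_add (l : List ℕ) (i : ℕ) (h : i < l.length) :
    (l.map (· + 1))[i]! = l[i]! + 1 := by
  rw [getE, getE, List.getElem?_map, List.getElem?_eq_getElem h]; rfl

theorem getE_take (l : List ℕ) (t i : ℕ) (h : i < t) : (l.take t)[i]! = l[i]! := by
  rw [getE, getE, List.getElem?_take, if_pos h]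

theorem getE_drop (l : List ℕ) (t i : ℕ) : (l.drop t)[i]! = l[t + i]! := by
  rw [getE, getE, List.getElem?_drop]

theorem getLast_eq (l : List ℕ) (hl : l ≠ []) : l.getLast hl = l[l.length - 1]! := by
  rw [List.getLast_eq_getElem, getElem!_pos]

/-- unconditional characterization -/
def Ch (l : List ℕ) : Prop :=
  (∀ i, l[i + 1]! ≤ l[i]! + 1) ∧ (∀ i, l[i + 2]! ≤ l[i]!) ∧
  (l ≠ [] → 1 ≤ l[l.length - 1]!)

theorem is01_iff (l : List ℕ) : Is01 l ↔ Ch l := by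
  unfold Is01 Ch
  rw [List.getLast!_eq_getElem!]
  constructor
  · rintro ⟨h1, h2, h3⟩
    refine ⟨fun i => ?_, fun i => ?_, h3⟩
    · rcases Nat.lt_or_ge (i+1) l.length with h | h
      · exact h1 i h
      · rw [getE_big l _ h]; omega
    · rcases Nat.lt_or_ge (i+2) l.length with h | h
      · exact h2 i h
      · rw [getE_big l _ h]; omega
  · rintro ⟨h1, h2, h3⟩
    exact ⟨fun i _ => h1 i, fun i _ => h2 i, h3⟩

theorem sum_map_add (l : List ℕ) : (l.map (· + 1)).sum = l.sum + l.length := by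
  induction l with
  | nil => simp
  | cons a t ih => simp [ih]; omega

theorem sum_map_sub (l : List ℕ) (h : ∀ x ∈ l, 1 ≤ x) :
    (l.map (· - 1)).sum + l.length = l.sum := by
  induction l with
  | nil => simp
  | cons a t ih =>
    have ha := h a (by simp)
    have := ih (fun x hx => h x (by simp [hx]))
    simp only [List.map_cons, List.sum_cons, List.length_cons]
    omega

theorem finite_aux (m n : ℕ) : {l : List ℕ | l.length ≤ m ∧ l.sum ≤ n}.Finite := by
  induction m with
  | zero =>
    apply Set.Finite.subset (Set.finite_singleton ([] : List ℕ))
    rintro l ⟨hl, -⟩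
    simp only [Set.mem_singleton_iff]
    exact List.eq_nil_of_length_eq_zero (Nat.le_zero.1 hl)
  | succ m ih =>
    apply Set.Finite.subset (((Set.finite_Iic n).image2 List.cons ih).insert [])
    rintro l ⟨hl, hs⟩
    cases l with
    | nil => simp
    | cons a t =>
      right
      refine Set.mem_image2.2 ⟨a, ?_, t, ⟨?_, ?_⟩, rfl⟩ <;>
        simp_all <;> omega

theorem finite_sub (P : List ℕ → Prop) (m n : ℕ)
    (h : ∀ l, P l → l.length ≤ m ∧ l.sum ≤ n) : Finite {l : List ℕ // P l} := by
  have : {l : List ℕ | P l}.Finite := (finite_aux m n).subset h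
  exact this.to_subtype


def F (m : ℕ) (l : List ℕ) : List ℕ := (l ++ List.replicate (m - l.length) 0).map (· + 1)
def G (l : List ℕ) : List ℕ := (l.map (· - 1)).rdropWhile (· == 0)

theorem lenF (m : ℕ) (l : List ℕ) (h : l.length ≤ m) : (F m l).length = m := by
  simp [F]; omega

theorem getE_F (m : ℕ) (l : List ℕ) (h : l.length ≤ m) (i : ℕ) (hi : i < m) :
    (F m l)[i]! = l[i]! + 1 := by
  rw [F, getE_map_add _ _ (by simp; omega), getE_pad]

theorem sumF (m : ℕ) (l : List ℕ) (h : l.length ≤ m) : (F m l).sum = l.sum + m := by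
  rw [F, sum_map_add]
  simp
  omega

theorem memF (m : ℕ) (l : List ℕ) : ∀ x ∈ F m l, 1 ≤ x := by
  intro x hx
  rcases List.mem_map.1 hx with ⟨y, -, rfl⟩
  omega

theorem is01F (m : ℕ) (l : List ℕ) (hl : Is01 l) (h : l.length ≤ m) : Is01 (F m l) := by
  rw [is01_iff] at hl ⊢
  obtain ⟨h1, h2, -⟩ := hl
  refine ⟨fun i => ?_, fun i => ?_, fun hne => ?_⟩
  · rcases Nat.lt_or_ge (i+1) m with hi | hi
    · rw [getE_F m l h _ hi, getE_F m l h i (by omega)]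
      have := h1 i; omega
    · rw [getE_big _ _ (by rw [lenF m l h]; omega)]; omega
  · rcases Nat.lt_or_ge (i+2) m with hi | hi
    · rw [getE_F m l h _ hi, getE_F m l h i (by omega)]
      have := h2 i; omega
    · rw [getE_big _ _ (by rw [lenF m l h]; omega)]; omega
  · have hm : 1 ≤ m := by
      by_contra hc
      apply hne
      have : (F m l).length = m := lenF m l h
      rw [← List.length_eq_zero_iff]; omega
    rw [lenF m l h, getE_F m l h _ (by omega)]
    omega

theorem rdrop_pad (l : List ℕ) (k : ℕ) :
    (l ++ List.replicate k 0).rdropWhile (· == 0) = l.rdropWhile (· == 0) := by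
  induction k with
  | zero => simp
  | succ k ih =>
    rw [List.replicate_succ' , ← List.append_assoc, List.rdropWhile_concat_pos _ _ _ (by simp), ih]

theorem rdrop_self (l : List ℕ) (hl : Is01 l) : l.rdropWhile (· == 0) = l := by
  rw [List.rdropWhile_eq_self_iff]
  intro h
  rw [getLast_eq l h]
  have := ((is01_iff l).1 hl).2.2 h
  simp
  rw [← getE]; omega

theorem GF (m : ℕ) (l : List ℕ) (hl : Is01 l) (h : l.length ≤ m) : G (F m l) = l := by
  have : (F m l).map (· - 1) = l ++ List.replicate (m - l.length) 0 := by
    rw [F, List.map_map]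
    have : ((fun x => x - 1) ∘ fun x => x + 1) = id := by funext x; simp
    rw [this, List.map_id]
  rw [G, this, rdrop_pad, rdrop_self l hl]

theorem rdrop_decomp (l : List ℕ) :
    l = l.rdropWhile (· == 0) ++ List.replicate (l.rtakeWhile (· == 0)).length 0 := by
  have h2 : ∀ x ∈ l.rtakeWhile (· == 0), x = 0 := by
    intro x hx
    simpa using List.mem_rtakeWhile_imp hx
  calc l = l.rdropWhile (· == 0) ++ l.rtakeWhile (· == 0) := by
        rw [List.rdropWhile, List.rtakeWhile, ← List.reverse_append,
          List.takeWhile_append_dropWhile, List.reverse_reverse]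
    _ = _ := by
        congr 1
        exact List.eq_replicate_of_mem h2

theorem FG (m : ℕ) (l : List ℕ) (hlen : l.length = m) (hmem : ∀ x ∈ l, 1 ≤ x) :
    F m (G l) = l := by
  have hd := rdrop_decomp (l.map (· - 1))
  have hlen2 : (G l).length + (((l.map (· - 1)).rtakeWhile (· == 0)).length) = m := by
    have := congrArg List.length hd
    simpa [G, hlen] using this.symm
  rw [F, G]
  rw [show m - ((l.map (· - 1)).rdropWhile (· == 0)).length
      = (((l.map (· - 1)).rtakeWhile (· == 0)).length) from by rw [← hlen2]; simp [G], ← hd]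
  rw [List.map_map]
  have : l.map ((fun x => x + 1) ∘ fun x => x - 1) = l.map id :=
    List.map_congr_left (fun x hx => by have := hmem x hx; simp; omega)
  rw [this, List.map_id]

theorem lenG (l : List ℕ) : (G l).length ≤ l.length := by
  have := (List.rdropWhile_prefix (· == 0) (l.map (· - 1))).length_le
  simpa [G] using this

theorem sumG (l : List ℕ) (hmem : ∀ x ∈ l, 1 ≤ x) : (G l).sum + l.length = l.sum := by
  have hd := rdrop_decomp (l.map (· - 1))
  have : (G l).sum = (l.map (· - 1)).sum := by
    conv_rhs => rw [hd]
    simp [G]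
  rw [this, sum_map_sub l hmem]

theorem is01G (l : List ℕ) (hl : Is01 l) (hmem : ∀ x ∈ l, 1 ≤ x) : Is01 (G l) := by
  rw [is01_iff] at hl ⊢
  obtain ⟨h1, h2, -⟩ := hl
  have hpre : G l = (l.map (· - 1)).take (G l).length := by
    have := (List.rdropWhile_prefix (· == 0) (l.map (· - 1)))
    rw [G]
    exact List.prefix_iff_eq_take.1 this
  have hgl : ∀ i, i < (G l).length → (G l)[i]! = l[i]! - 1 := by
    intro i hi
    conv_lhs => rw [hpre]
    rw [getE_take _ _ _ hi, getE_map_sub]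
  have hge : ∀ i, i < (G l).length → 1 ≤ l[i]! := by
    intro i hi
    have hil : i < l.length := by
      have := lenG l; omega
    have : l[i]! ∈ l := by
      rw [getElem!_pos l i hil]
      exact List.getElem_mem hil
    exact hmem _ this
  refine ⟨fun i => ?_, fun i => ?_, fun hne => ?_⟩
  · rcases Nat.lt_or_ge (i+1) (G l).length with hi | hi
    · rw [hgl _ hi, hgl i (by omega)]
      have := h1 i
      have := hge i (by omega)
      omega
    · rw [getE_big _ _ hi]; omega
  · rcases Nat.lt_or_ge (i+2) (G l).length with hi | hi
    · rw [hgl _ hi, hgl i (by omega)]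
      have := h2 i
      omega
    · rw [getE_big _ _ hi]; omega
  · have := List.rdropWhile_last_not (· == 0) (l.map (· - 1)) hne
    have this2 : ¬((G l).getLast hne == 0) = true := this
    rw [getLast_eq _ hne] at this2
    simp only [beq_iff_eq] at this2
    omega

theorem getE_app2 (q : List ℕ) (a b i : ℕ) :
    (q ++ [a, b])[i]! =
      if i < q.length then q[i]! else if i = q.length then a
      else if i = q.length + 1 then b else 0 := by
  rw [getE, List.getElem?_append]
  rcases Nat.lt_or_ge i q.length with h | h
  · rw [if_pos h, if_pos h, ← getE]
  · rw [if_neg (by omega), if_neg (by omega)]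
    rcases Nat.eq_or_lt_of_le h with h1 | h1
    · rw [if_pos (by omega), show i - q.length = 0 from by omega]; rfl
    · rcases Nat.eq_or_lt_of_le h1 with h2 | h2
      · rw [if_neg (by omega), if_pos (by omega), show i - q.length = 1 from by omega]; rfl
      · rw [if_neg (by omega), if_neg (by omega),
          List.getElem?_eq_none (by simp; omega)]; rfl

theorem is01_app2 (q : List ℕ) (hq : Is01 q) : Is01 (q ++ [0, 1]) := by
  rw [is01_iff] at hq ⊢
  obtain ⟨h1, h2, h3⟩ := hq
  refine ⟨fun i => ?_, fun i => ?_, fun _ => ?_⟩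
  · rw [getE_app2, getE_app2]
    have H1 := h1 i
    split_ifs <;> omega
  · rw [getE_app2, getE_app2]
    have H2 := h2 i
    by_cases hc : i + 2 = q.length + 1
    · have hq' : q ≠ [] := by
        intro hnil; rw [hnil] at hc; simp only [List.length_nil] at hc; omega
      have hq3 := h3 hq'
      rw [if_neg (by omega), if_neg (by omega), if_pos (by omega), if_pos (by omega),
        show i = q.length - 1 from by omega]
      exact hq3
    · split_ifs <;> omega
  · have hlen2 : (q ++ [0,1]).length = q.length + 2 := by simp
    rw [getE_app2, if_neg (by omega), if_neg (by omega), if_pos (by omega)]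

theorem zero_prop (l : List ℕ) (h2 : ∀ i, l[i+2]! ≤ l[i]!) (j : ℕ) (hj : l[j]! = 0) :
    ∀ d, l[j + 2*d]! = 0 := by
  intro d
  induction d with
  | zero => simpa using hj
  | succ d ih =>
    have := h2 (j + 2*d)
    rw [show j + 2*(d+1) = (j+2*d)+2 from by ring]
    omega

theorem back_struct (m : ℕ) (hm : 2 ≤ m) (l : List ℕ) (hl : Is01 l) (hlen : l.length = m)
    (hz : ¬ ∀ x ∈ l, 1 ≤ x) :
    l[m-2]! = 0 ∧ l[m-1]! = 1 := by
  rw [is01_iff] at hl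
  obtain ⟨h1, h2, h3⟩ := hl
  have hne : l ≠ [] := by intro h; rw [h] at hlen; simp at hlen; omega
  have hlast : 1 ≤ l[m-1]! := by have := h3 hne; rwa [hlen] at this
  push_neg at hz
  obtain ⟨x, hx, hx1⟩ := hz
  have hx0 : x = 0 := by omega
  obtain ⟨j, hjlt, hjv⟩ := List.mem_iff_getElem.1 hx
  have hj : l[j]! = 0 := by rw [getElem!_pos l j hjlt, hjv, hx0]
  have hprop := zero_prop l h2 j hj
  have hjm : j < m := by rwa [hlen] at hjlt
  have hjne : j ≠ m - 1 := by intro h; rw [h] at hj; omega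
  rcases Nat.even_or_odd (m - 2 - j) with he | ho
  · obtain ⟨d, hd⟩ := he
    have h02 : l[m-2]! = 0 := by rw [show m-2 = j + 2*d from by omega]; exact hprop d
    have := h1 (m-2)
    rw [show m - 2 + 1 = m - 1 from by omega] at this
    exact ⟨h02, by omega⟩
  · exfalso
    obtain ⟨d, hd⟩ := ho
    have : l[m-1]! = 0 := by rw [show m-1 = j + 2*(d+1) from by omega]; exact hprop (d+1)
    omega

theorem eq_pair (t : List ℕ) (h : t.length = 2) : t = [t[0]!, t[1]!] := by
  rcases t with _ | ⟨a, _ | ⟨b, _ | ⟨c, t⟩⟩⟩ <;> simp_all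

theorem decomp2 (m : ℕ) (hm : 2 ≤ m) (l : List ℕ) (hlen : l.length = m) :
    l = l.take (m-2) ++ [l[m-2]!, l[m-1]!] := by
  conv_lhs => rw [← List.take_append_drop (m-2) l]
  congr 1
  have hd : (l.drop (m-2)).length = 2 := by simp [hlen]; omega
  have e0 : (l.drop (m-2))[0]! = l[m-2]! := by rw [getE_drop, Nat.add_zero]
  have e1 : (l.drop (m-2))[1]! = l[m-1]! := by
    rw [getE_drop, show m-2+1 = m-1 from by omega]
  rw [eq_pair _ hd, e0, e1]

theorem len_take (m : ℕ) (hm : 2 ≤ m) (l : List ℕ) (hlen : l.length = m) :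
    (l.take (m-2)).length = m - 2 := by
  simp [hlen]

theorem is01_take (m : ℕ) (hm : 2 ≤ m) (l : List ℕ) (hl : Is01 l) (hlen : l.length = m) :
    Is01 (l.take (m-2)) := by
  rw [is01_iff] at hl ⊢
  obtain ⟨h1, h2, h3⟩ := hl
  have hlt := len_take m hm l hlen
  refine ⟨fun i => ?_, fun i => ?_, fun hne => ?_⟩
  · rcases Nat.lt_or_ge (i+1) (m-2) with hi | hi
    · rw [getE_take _ _ _ hi, getE_take _ _ _ (by omega)]
      exact h1 i
    · rw [getE_big _ _ (by omega)]; omega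
  · rcases Nat.lt_or_ge (i+2) (m-2) with hi | hi
    · rw [getE_take _ _ _ hi, getE_take _ _ _ (by omega)]
      exact h2 i
    · rw [getE_big _ _ (by omega)]; omega
  · have hm3 : 3 ≤ m := by
      by_contra hc
      apply hne
      rw [← List.length_eq_zero_iff]
      omega
    have hne' : l ≠ [] := by intro h; rw [h] at hlen; simp at hlen; omega
    have hlast : 1 ≤ l[m-1]! := by have := h3 hne'; rwa [hlen] at this
    have := h2 (m-3)
    rw [show m - 3 + 2 = m - 1 from by omega] at this
    rw [hlt, show m - 2 - 1 = m - 3 from by omega, getE_take _ _ _ (by omega)]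
    omega

def e1_equiv (m n : ℕ) :
    {l : List ℕ // Is01 l ∧ l.length ≤ m ∧ l.sum = n} ≃
    {l : List ℕ // Is01 l ∧ l.length = m ∧ l.sum = n + m ∧ ∀ x ∈ l, 1 ≤ x} where
  toFun := fun ⟨l, h1, h2, h3⟩ =>
    ⟨F m l, is01F m l h1 h2, lenF m l h2, by rw [sumF m l h2, h3], memF m l⟩
  invFun := fun ⟨l, h1, h2, h3, h4⟩ =>
    ⟨G l, is01G l h1 h4, by have := lenG l; omega, by have := sumG l h4; omega⟩
  left_inv := fun ⟨l, h1, h2, h3⟩ => Subtype.ext (GF m l h1 h2)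
  right_inv := fun ⟨l, h1, h2, h3, h4⟩ => Subtype.ext (FG m l h2 h4)

def e2_equiv (m n : ℕ) (hm : 2 ≤ m) :
    {l : List ℕ // Is01 l ∧ l.length = m - 2 ∧ l.sum = n + m - 1} ≃
    {l : List ℕ // Is01 l ∧ l.length = m ∧ l.sum = n + m ∧ ¬ ∀ x ∈ l, 1 ≤ x} where
  toFun := fun ⟨q, h1, h2, h3⟩ =>
    ⟨q ++ [0, 1], is01_app2 q h1, by simp [h2]; omega, by simp [h3]; omega,
      fun hall => by have := hall 0 (by simp); omega⟩
  invFun := fun ⟨l, h1, h2, h3, h4⟩ =>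
    ⟨l.take (m - 2), is01_take m hm l h1 h2, len_take m hm l h2, by
      have hbs := back_struct m hm l h1 h2 h4
      have hd := congrArg List.sum (decomp2 m hm l h2)
      simp only [List.sum_append, List.sum_cons, List.sum_nil] at hd
      omega⟩
  left_inv := fun ⟨q, h1, h2, h3⟩ => Subtype.ext (by
    simp only
    rw [show m - 2 = q.length from h2.symm, List.take_left])
  right_inv := fun ⟨l, h1, h2, h3, h4⟩ => Subtype.ext (by
    simp only
    have hbs := back_struct m hm l h1 h2 h4
    rw [show ([0,1] : List ℕ) = [l[m-2]!, l[m-1]!] from by rw [hbs.1, hbs.2]]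
    exact (decomp2 m hm l h2).symm)

end J01

open J01 in
/-- The number of 01-partitions of `n` with at most `m` parts equals
`j(m, n+m) - j(m-2, n+m-1)`, and also equals `k(m, n+m)`. -/
theorem jagged_atMost_parts (m n : ℕ) (hm : 2 ≤ m) :
    jle m n = j2 m (n + m) - j2 (m - 2) (n + m - 1) ∧ jle m n = k2 m (n + m) := by
  classical
  haveI fA : Finite {l : List ℕ // Is01 l ∧ l.length = m ∧ l.sum = n + m} :=
    finite_sub _ m (n + m) (fun l h => ⟨h.2.1.le, h.2.2.le⟩)
  have hk : jle m n = k2 m (n + m) := by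
    unfold jle k2
    exact Nat.card_congr (e1_equiv m n)
  have key : Nat.card {l : List ℕ // Is01 l ∧ l.length = m ∧ l.sum = n + m}
      = Nat.card {l : List ℕ // Is01 l ∧ l.length = m ∧ l.sum = n + m ∧ ∀ x ∈ l, 1 ≤ x}
      + Nat.card {l : List ℕ // Is01 l ∧ l.length = m ∧ l.sum = n + m ∧ ¬ ∀ x ∈ l, 1 ≤ x} := by
    rw [← Nat.card_congr (Equiv.sumCompl
      (fun x : {l : List ℕ // Is01 l ∧ l.length = m ∧ l.sum = n + m} => ∀ y ∈ x.1, 1 ≤ y)),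
      Nat.card_sum]
    congr 1
    · exact Nat.card_congr ((Equiv.subtypeSubtypeEquivSubtypeInter
        (fun l : List ℕ => Is01 l ∧ l.length = m ∧ l.sum = n + m)
        (fun l => ∀ y ∈ l, 1 ≤ y)).trans
        (Equiv.subtypeEquivRight (fun l => by tauto)))
    · exact Nat.card_congr ((Equiv.subtypeSubtypeEquivSubtypeInter
        (fun l : List ℕ => Is01 l ∧ l.length = m ∧ l.sum = n + m)
        (fun l => ¬ ∀ y ∈ l, 1 ≤ y)).trans
        (Equiv.subtypeEquivRight (fun l => by tauto)))
  have hCeq : Nat.card {l : List ℕ // Is01 l ∧ l.length = m ∧ l.sum = n + m ∧ ¬ ∀ x ∈ l, 1 ≤ x}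
      = j2 (m - 2) (n + m - 1) := by
    unfold j2
    exact (Nat.card_congr (e2_equiv m n hm)).symm
  have hj2 : j2 m (n + m) = k2 m (n + m) + j2 (m - 2) (n + m - 1) := by
    rw [← hCeq]
    exact key
  exact ⟨by rw [hk]; omega, hk⟩
end

section
/- The theta function identity θ₂(q²)² + θ₃(q²)² = θ₃(q)² holds, i.e., (∑_{n∈ℤ} q^{2n²})² + q·(∑_{n∈ℤ} q^{2n(n+1)})² = (∑_{n∈ℤ} q^{n²})². -/
/-! Multiplication by `1 + i` on `ℤ[i]`, i.e. `(a, b) ↦ (a + b, a - b)`, doubles the norm: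
`(a + b)² + (a - b)² = 2a² + 2b²`, and its image is the set of points `(x, y)` with `x + y`
even. The points with `x + y` odd are the image of the shifted map `(a, b) ↦ (a + b + 1, a - b)`,
for which `(a + b + 1)² + (a - b)² = 2a(a + 1) + 2b(b + 1) + 1`. -/

def sumDiffEquiv : ℤ × ℤ ⊕ ℤ × ℤ ≃ ℤ × ℤ where
  toFun := Sum.elim (fun a => (a.1 + a.2, a.1 - a.2)) (fun a => (a.1 + a.2 + 1, a.1 - a.2))
  -- `/` on `ℤ` rounds down, so the same quotients also invert the odd branch.
  invFun x :=
    if Even (x.1 + x.2) then .inl ((x.1 + x.2) / 2, (x.1 - x.2) / 2)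
    else .inr ((x.1 + x.2) / 2, (x.1 - x.2) / 2)
  left_inv := by
    rintro (⟨a, b⟩ | ⟨a, b⟩)
    · have : Even (a + b + (a - b)) := ⟨a, by ring⟩
      simp only [Sum.elim_inl, this, if_true, Sum.inl.injEq, Prod.mk.injEq]
      omega
    · have : ¬Even (a + b + 1 + (a - b)) := Int.not_even_iff_odd.mpr ⟨a, by ring⟩
      simp only [Sum.elim_inr, this, if_false, Sum.inr.injEq, Prod.mk.injEq]
      omega
  right_inv := by
    rintro ⟨x, y⟩
    by_cases h : Even (x + y) <;>
      simp only [h, if_true, if_false, Sum.elim_inl, Sum.elim_inr, Prod.mk.injEq] <;>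
      rw [Int.even_iff] at h <;> omega

theorem sumDiffEquiv_inl_sq_add_sq (a : ℤ × ℤ) :
    (sumDiffEquiv (.inl a)).1 ^ 2 + (sumDiffEquiv (.inl a)).2 ^ 2 = 2 * a.1 ^ 2 + 2 * a.2 ^ 2 := by
  simp only [sumDiffEquiv, Equiv.coe_fn_mk, Sum.elim_inl]; ring

theorem sumDiffEquiv_inr_sq_add_sq (a : ℤ × ℤ) :
    (sumDiffEquiv (.inr a)).1 ^ 2 + (sumDiffEquiv (.inr a)).2 ^ 2 =
      2 * a.1 * (a.1 + 1) + 2 * a.2 * (a.2 + 1) + 1 := by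
  simp only [sumDiffEquiv, Equiv.coe_fn_mk, Sum.elim_inr]; ring

theorem finite_sq_add_sq_eq (n : ℤ) : Finite {x : ℤ × ℤ // x.1 ^ 2 + x.2 ^ 2 = n} := by
  refine Set.Finite.to_subtype ((Set.finite_Icc (-n) n).prod (Set.finite_Icc (-n) n) |>.subset ?_)
  rintro ⟨x, y⟩ (h : x ^ 2 + y ^ 2 = n)
  have := sq_nonneg x; have := Int.le_self_sq x; have := Int.le_self_sq (-x)
  have := sq_nonneg y; have := Int.le_self_sq y; have := Int.le_self_sq (-y)
  exact ⟨⟨by linarith, by linarith⟩, by linarith, by linarith⟩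

theorem Nat.card_add_card_of_equiv {α β γ : Type*} [Finite γ] (e : α ⊕ β ≃ γ) :
    Nat.card α + Nat.card β = Nat.card γ := by
  have := Finite.of_equiv γ e.symm
  have := Finite.sum_left β (α := α)
  have := Finite.sum_right α (β := β)
  rw [← Nat.card_sum, Nat.card_congr e]

def sumDiffEquivOfEq (n : ℤ) :
    {a : ℤ × ℤ // 2 * a.1 ^ 2 + 2 * a.2 ^ 2 = n} ⊕
        {a : ℤ × ℤ // 2 * a.1 * (a.1 + 1) + 2 * a.2 * (a.2 + 1) + 1 = n} ≃
      {x : ℤ × ℤ // x.1 ^ 2 + x.2 ^ 2 = n} :=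
  (Equiv.subtypeSum (p := Sum.elim (fun a => 2 * a.1 ^ 2 + 2 * a.2 ^ 2 = n)
    fun a => 2 * a.1 * (a.1 + 1) + 2 * a.2 * (a.2 + 1) + 1 = n)).symm.trans <|
    sumDiffEquiv.subtypeEquiv fun
      | .inl a => by rw [sumDiffEquiv_inl_sq_add_sq]; rfl
      | .inr a => by rw [sumDiffEquiv_inr_sq_add_sq]; rfl

/-- The theta identity `θ₂(q²)² + θ₃(q²)² = θ₃(q)²`, i.e.
`(∑_{n∈ℤ} q^{2n²})² + q (∑_{n∈ℤ} q^{2n(n+1)})² = (∑_{n∈ℤ} q^{n²})²`,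
stated coefficient-wise: for each `p`, the number of representations of `p` as
`2x² + 2y²` plus the number of representations of `p` as `2x(x+1) + 2y(y+1) + 1`
equals the number of representations of `p` as `x² + y²` (with `x, y ∈ ℤ`). -/
theorem theta_identity (p : ℕ) :
    Nat.card {x : ℤ × ℤ // 2 * x.1 ^ 2 + 2 * x.2 ^ 2 = (p : ℤ)} +
      Nat.card {x : ℤ × ℤ // 2 * x.1 * (x.1 + 1) + 2 * x.2 * (x.2 + 1) + 1 = (p : ℤ)}
    = Nat.card {x : ℤ × ℤ // x.1 ^ 2 + x.2 ^ 2 = (p : ℤ)} :=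
  have := finite_sq_add_sq_eq p
  Nat.card_add_card_of_equiv (sumDiffEquivOfEq p)
end
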